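/- arXiv:1603.06706 — 7 statements merged into one kernel-verified Lean document; each statement's English description precedes it below -/
import Mathlib

section
/- Let p be a prime, n ≥ 1, q = p^n, and let F be a finite field with q² elements. Then the number of points of the projective plane PG(2,F) (the projectivization of F³) whose homogeneous coordinates (x, y, t) satisfy x^{q+1} + y^{q+1} + t^{q+1} = 0 is exactly q³ + 1. -/
/-!
Over a field `F` with `q²` elements, `x ↦ x ^ (q + 1)` vanishes only at `0`, and it is
`(q + 1)`-to-one from `Fˣ` onto the elements `c ≠ 0` with `c ^ q = c`, because `Fˣ` is cyclic of
order `(q - 1) (q + 1)`. As `x ↦ x ^ q` is a ring endomorphism, a sum of such powers is again fixed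
by it, so fixing all coordinates but one shows that the number `aₖ` of zeros of
`x₁ ^ (q + 1) + ⋯ + xₖ ^ (q + 1)` in `Fᵏ` satisfies `aₖ₊₁ + q aₖ = (q + 1) q ^ (2k)`. Hence
`a₃ = q⁵ - q³ + q²`; removing the origin and dividing by `#Fˣ = q² - 1` leaves `q³ + 1` points.
-/

open Finset
open scoped LinearAlgebra.Projectivization

theorem Nat.card_subtype_ne_and_add_one {α : Type*} [Finite α] {p : α → Prop} {a : α}
    (ha : p a) : Nat.card {x // x ≠ a ∧ p x} + 1 = Nat.card {x // p x} := by
  have hdiff : {x | x ≠ a ∧ p x} = {x | p x} \ {a} := by ext; simp [and_comm]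
  change Nat.card {x | x ≠ a ∧ p x} + 1 = Nat.card {x | p x}
  rw [Nat.card_coe_set_eq, Nat.card_coe_set_eq, hdiff,
    Set.ncard_sdiff_singleton_add_one (s := {x | p x}) ha]

theorem IsCyclic.card_pow_eq_of_pow_eq_one {G : Type*} [CommGroup G] [IsCyclic G] [Finite G]
    {m d : ℕ} (hG : Nat.card G = m * d) {u : G} (hu : u ^ m = 1) :
    Nat.card {v : G // v ^ d = u} = d := by
  have hd : 0 < d := Nat.pos_of_mul_pos_left (hG ▸ Nat.card_pos)
  have hrange : (powMonoidHom d : G →* G).range = (powMonoidHom m).ker := by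
    refine Subgroup.eq_of_le_of_card_ge ?_ ?_
    · rintro _ ⟨v, rfl⟩
      rw [MonoidHom.mem_ker, powMonoidHom_apply, powMonoidHom_apply, ← pow_mul, mul_comm,
        ← hG, pow_card_eq_one']
    · rw [IsCyclic.card_powMonoidHom_ker, IsCyclic.card_powMonoidHom_range, hG,
        Nat.gcd_mul_right_left, Nat.gcd_mul_left_left, Nat.mul_div_cancel _ hd]
  obtain ⟨a, rfl⟩ : u ∈ (powMonoidHom d : G →* G).range := hrange ▸ hu
  calc Nat.card {v // v ^ d = powMonoidHom d a}
      _ = Nat.card (powMonoidHom d : G →* G).ker :=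
        Nat.card_congr ((powMonoidHom d).fiberEquivKer a)
      _ = d := by rw [IsCyclic.card_powMonoidHom_ker, hG, Nat.gcd_mul_left_left]

theorem card_pow_eq_coe_eq_card_units {M₀ : Type*} [GroupWithZero M₀] {n : ℕ} (hn : n ≠ 0)
    (u : M₀ˣ) : Nat.card {x : M₀ // x ^ n = u} = Nat.card {v : M₀ˣ // v ^ n = u} := by
  have hx (x : {x : M₀ // x ^ n = u}) : x.1 ≠ 0 :=
    fun h => u.ne_zero (by rw [← x.2, h, zero_pow hn])
  exact Nat.card_congr
    { toFun x := ⟨Units.mk0 x.1 (hx x), Units.ext (by simpa using x.2)⟩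
      invFun v := ⟨v.1, by simpa using congrArg Units.val v.2⟩
      left_inv _ := rfl
      right_inv _ := Subtype.ext (Units.ext rfl) }

namespace Projectivization

variable {k V : Type*} [DivisionRing k] [AddCommGroup V] [Module k V]

theorem card_subtype_rep_mul_card_units (S : V → Prop)
    (hS : ∀ (a : kˣ) (v : V), S (a • v) ↔ S v) :
    Nat.card {P : ℙ k V // S P.rep} * Nat.card kˣ = Nat.card {v : V // v ≠ 0 ∧ S v} := by
  rw [← Nat.card_prod]
  refine Nat.card_congr <| Equiv.prodSubtypeFstEquivSubtypeProd.symm.trans <|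
    ((nonZeroEquivProjectivizationProdUnits k V).subtypeEquiv fun w => ?_).symm.trans <|
    Equiv.subtypeSubtypeEquivSubtypeInter _ _
  obtain ⟨a, ha⟩ := exists_smul_eq_mk_rep k w.1 w.2
  exact (hS a w).symm.trans (ha ▸ Iff.rfl)

end Projectivization

namespace FiniteField

variable {F : Type*} [Field F] [Fintype F] {q : ℕ}

theorem exists_ringHom_eq_pow_of_card_eq_sq (hF : Fintype.card F = q ^ 2) :
    ∃ φ : F →+* F, ∀ x, φ x = x ^ q := by
  obtain ⟨n, hp, hcard⟩ := FiniteField.card F (ringChar F)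
  have : Fact (ringChar F).Prime := ⟨hp⟩
  have hdvd : q ∣ ringChar F ^ (n : ℕ) := by rw [← hcard, hF]; exact dvd_pow_self q two_ne_zero
  obtain ⟨k, -, hk⟩ := (Nat.dvd_prime_pow hp).1 hdvd
  exact ⟨iterateFrobenius F (ringChar F) k, fun x => by rw [iterateFrobenius_def, hk]⟩

theorem card_pow_succ_eq_of_pow_eq_self (hF : Fintype.card F = q ^ 2) {c : F} (hc : c ^ q = c)
    (h0 : c ≠ 0) : Nat.card {x : F // x ^ (q + 1) = c} = q + 1 := by
  have hq : q ≠ 0 := by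
    rintro rfl
    exact Fintype.card_ne_zero (hF.trans (zero_pow two_ne_zero))
  have hcard : Nat.card Fˣ = (q - 1) * (q + 1) := by
    rw [Nat.card_units, Nat.card_eq_fintype_card, hF]
    simpa [mul_comm] using Nat.sq_sub_sq q 1
  refine (card_pow_eq_coe_eq_card_units q.succ_ne_zero (Units.mk0 c h0)).trans
    (IsCyclic.card_pow_eq_of_pow_eq_one hcard (Units.ext ?_))
  simp only [Units.val_pow_eq_pow_val, Units.val_mk0, Units.val_one]
  exact mul_right_cancel₀ h0 (by rw [pow_sub_one_mul hq, hc, one_mul])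

theorem card_sum_pow_succ_eq_zero_succ (hF : Fintype.card F = q ^ 2) (k : ℕ) :
    Nat.card {v : Fin (k + 1) → F // ∑ i, v i ^ (q + 1) = 0} +
      q * Nat.card {v : Fin k → F // ∑ i, v i ^ (q + 1) = 0} = (q + 1) * q ^ (2 * k) := by
  classical
  obtain ⟨φ, hφ⟩ := exists_ringHom_eq_pow_of_card_eq_sq hF
  set N : (Fin k → F) → F := fun w => ∑ i, w i ^ (q + 1)
  have e : {v : Fin (k + 1) → F // ∑ i, v i ^ (q + 1) = 0} ≃
      Σ w : Fin k → F, {x : F // x ^ (q + 1) = -N w} :=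
    { toFun v := ⟨Fin.tail v.1, v.1 0,
        eq_neg_of_add_eq_zero_left ((Fin.sum_univ_succ _).symm.trans v.2)⟩
      invFun s := ⟨Fin.cons s.2.1 s.1, by simp [Fin.sum_univ_succ, s.2.2, N]⟩
      left_inv v := Subtype.ext (Fin.cons_self_tail v.1)
      right_inv _ := rfl }
  have hnorm (x : F) : φ (x ^ (q + 1)) = x ^ (q + 1) := by
    rw [hφ, ← pow_mul, add_mul, one_mul, pow_add, ← sq, ← hF, FiniteField.pow_card, pow_succ']
  have hfiber (w : Fin k → F) :
      Nat.card {x : F // x ^ (q + 1) = -N w} = if N w = 0 then 1 else q + 1 := by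
    split_ifs with h0
    · simp [h0, pow_eq_zero_iff]
    refine card_pow_succ_eq_of_pow_eq_self hF ?_ (neg_ne_zero.2 h0)
    rw [← hφ, map_neg, map_sum]
    simp only [hnorm, N]
  have hsplit := card_filter_add_card_filter_not (s := univ) (fun w : Fin k → F => N w = 0)
  rw [Nat.card_congr e, Nat.card_sigma, Nat.card_eq_fintype_card, Fintype.card_subtype]
  simp_rw [hfiber]
  rw [sum_ite, sum_const, sum_const, smul_eq_mul, smul_eq_mul]
  rw [card_univ, Fintype.card_fun, Fintype.card_fin, hF, ← pow_mul] at hsplit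
  linear_combination (q + 1) * hsplit

end FiniteField

theorem hermitian_curve_card_rational_points_general
    (q : ℕ)
    (F : Type) [Field F] [Fintype F] (hF : Fintype.card F = q ^ 2) :
    Nat.card {P : Projectivization F (Fin 3 → F) //
        P.rep 0 ^ (q + 1) + P.rep 1 ^ (q + 1) + P.rep 2 ^ (q + 1) = 0} = q ^ 3 + 1 := by
  have hform (v : Fin 3 → F) :
      v 0 ^ (q + 1) + v 1 ^ (q + 1) + v 2 ^ (q + 1) = ∑ i, v i ^ (q + 1) :=
    (Fin.sum_univ_three fun i => v i ^ (q + 1)).symm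
  simp only [hform]
  have h0 : Nat.card {v : Fin 0 → F // ∑ i, v i ^ (q + 1) = 0} = 1 := by simp
  have h1 := FiniteField.card_sum_pow_succ_eq_zero_succ hF 0
  have h2 := FiniteField.card_sum_pow_succ_eq_zero_succ hF 1
  have h3 := FiniteField.card_sum_pow_succ_eq_zero_succ hF 2
  have hcone := Nat.card_subtype_ne_and_add_one
    (p := fun v : Fin 3 → F => ∑ i, v i ^ (q + 1) = 0) (a := 0) (by simp)
  have hproj := Projectivization.card_subtype_rep_mul_card_units (k := F)
    (fun v : Fin 3 → F => ∑ i, v i ^ (q + 1) = 0) fun a v => by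
      simp [Units.smul_def, mul_pow, ← mul_sum]
  have hunits : Nat.card Fˣ + 1 = q ^ 2 := by
    rw [← Nat.card_eq_card_units_add_one, Nat.card_eq_fintype_card, hF]
  refine Nat.eq_of_mul_eq_mul_right (Nat.card_pos (α := Fˣ)) ?_
  zify at h0 h1 h2 h3 hcone hproj hunits ⊢
  linear_combination hproj + hcone + h3 - q * h2 + q ^ 2 * h1 - q ^ 3 * h0 - (q ^ 3 + 1) * hunits

/-- Let `p` be a prime, `n ≥ 1`, `q = p ^ n`, and let `F` be a finite field
with `q²` elements. Then the number of points of the projective plane `PG(2, F)` (the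
projectivization of `F³`) whose homogeneous coordinates `(x, y, t)` satisfy
`x^(q+1) + y^(q+1) + t^(q+1) = 0` is exactly `q³ + 1`. -/
theorem hermitian_curve_card_rational_points
    (p n q : ℕ) (hp : p.Prime) (hn : 1 ≤ n) (hq : q = p ^ n)
    (F : Type) [Field F] [Fintype F] (hF : Fintype.card F = q ^ 2) :
    Nat.card {P : Projectivization F (Fin 3 → F) //
        P.rep 0 ^ (q + 1) + P.rep 1 ^ (q + 1) + P.rep 2 ^ (q + 1) = 0} = q ^ 3 + 1 :=
  hermitian_curve_card_rational_points_general q F hF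
end

section
/- Let p be a prime, n ≥ 1, q = p^n, and let F be a finite field with q² elements. For every line ℓ of PG(2,F) (the projectivization of a 2-dimensional F-linear subspace of F³), the number of points of ℓ lying on the Hermitian curve H_q(F) is either exactly 1 or exactly q + 1. -/
/-!
Put `σ x = x ^ q`, an involutive automorphism of `F` since `|F| = q²`. The curve is the set of
isotropic points of the Hermitian form `h x y = ∑ xᵢ σ(yᵢ)`. A plane `W ⊆ F³` is not totally
isotropic: `σ` maps a totally isotropic subspace injectively into its own orthogonal for the dot
product, so its dimension is at most `3 / 2`. Hence `W` contains `u` with `h u u ≠ 0` and a nonzero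
`w` with `h w u = 0`. The points of the line other than `[u]` are the `[w + s • u]`, and
`h (w + s • u) (w + s • u) = h w w + s ^ (q + 1) * h u u`, so the points on the curve correspond to
the solutions of `s ^ (q + 1) = c` for some `c` with `c ^ q = c`. Since `Fˣ` is cyclic of order
`(q + 1) (q - 1)`, there are `q + 1` solutions if `c ≠ 0`, and one if `c = 0`.
-/

open Module Matrix

section HermForm

variable {ι F : Type*} [Fintype ι] [Field F]

def hermForm (σ : F →+* F) : (ι → F) →ₗ[F] (ι → F) →ₛₗ[σ] F :=
  LinearMap.mk₂'ₛₗ (RingHom.id F) σ (fun x y => ∑ i, x i * σ (y i))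
    (fun _ _ _ => by simp [add_mul, Finset.sum_add_distrib])
    (fun _ _ _ => by simp [Finset.mul_sum, mul_assoc])
    (fun _ _ _ => by simp [mul_add, Finset.sum_add_distrib])
    (fun _ _ _ => by simp [Finset.mul_sum, mul_left_comm])

variable {σ : F →+* F}

theorem hermForm_apply (x y : ι → F) : hermForm σ x y = ∑ i, x i * σ (y i) := rfl

theorem apply_hermForm (hσ : Function.Involutive σ) (x y : ι → F) :
    σ (hermForm σ x y) = hermForm σ y x := by
  simp [hermForm_apply, hσ _, mul_comm]

theorem hermForm_smul_self_eq_zero_iff {c : F} (hc : c ≠ 0) (x : ι → F) :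
    hermForm σ (c • x) (c • x) = 0 ↔ hermForm σ x x = 0 := by
  simp [hc]

theorem hermForm_add_smul_add_smul (x y : ι → F) (s : F) :
    hermForm σ (x + s • y) (x + s • y) =
      hermForm σ x x + σ s * hermForm σ x y + s * hermForm σ y x +
        s * σ s * hermForm σ y y := by
  simp only [map_add, map_smul, LinearMap.add_apply, LinearMap.smul_apply,
    LinearMap.map_smulₛₗ, smul_eq_mul]
  ring

theorem exists_add_apply_ne_zero (hσ₁ : σ ≠ RingHom.id F) : ∃ μ, μ + σ μ ≠ 0 := by
  by_contra! h
  have two : (1 : F) + 1 = 0 := by simpa using h 1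
  exact hσ₁ (RingHom.ext fun x => by linear_combination h x - x * two)

theorem hermForm_eq_zero_of_forall_self (hσ : Function.Involutive σ)
    (hμ : ∃ μ, μ + σ μ ≠ 0) {W : Submodule F (ι → F)} (hW : ∀ v ∈ W, hermForm σ v v = 0)
    {x y : ι → F} (hx : x ∈ W) (hy : y ∈ W) : hermForm σ x y = 0 := by
  by_contra hb
  obtain ⟨μ, hμ⟩ := hμ
  have hv := hW _ (W.add_mem hx (W.smul_mem (σ (μ / hermForm σ x y)) hy))
  rw [hermForm_add_smul_add_smul, hW x hx, hW y hy, ← apply_hermForm hσ x y, hσ (μ / _),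
    ← map_mul, div_mul_cancel₀ _ hb] at hv
  exact hμ (by linear_combination hv)

theorem two_mul_finrank_le_of_hermForm_eq_zero [Finite F] {W : Submodule F (ι → F)}
    (hW : ∀ x ∈ W, ∀ y ∈ W, hermForm σ x y = 0) : 2 * finrank F W ≤ Fintype.card ι := by
  let B : LinearMap.BilinForm F (ι → F) := dotProductBilin F F
  have hB : B.Nondegenerate := ⟨fun x hx => dotProduct_eq_zero x hx,
    fun y hy => dotProduct_eq_zero y fun x => (dotProduct_comm y x).trans (hy x)⟩
  -- `y ↦ σ ∘ y` embeds `W` into its orthogonal complement for the dot product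
  have hcard : Nat.card W ≤ Nat.card (B.orthogonal W) :=
    Nat.card_le_card_of_injective (fun y => ⟨σ ∘ y, fun x hx => hW x hx y y.2⟩)
      fun y z hyz => Subtype.ext <| funext fun i =>
        σ.injective (congrFun (congrArg Subtype.val hyz) i)
  rw [natCard_eq_pow_finrank (K := F) (V := W),
    natCard_eq_pow_finrank (K := F) (V := B.orthogonal W),
    LinearMap.BilinForm.finrank_orthogonal hB, finrank_pi,
    Nat.pow_le_pow_iff_right Finite.one_lt_card] at hcard
  have := Submodule.finrank_le W
  rw [finrank_pi] at this
  omega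

theorem exists_mem_hermForm_self_ne_zero [Finite F] (hσ : Function.Involutive σ)
    (hσ₁ : σ ≠ RingHom.id F) {W : Submodule F (ι → F)}
    (hW : Fintype.card ι < 2 * finrank F W) : ∃ u ∈ W, hermForm σ u u ≠ 0 := by
  by_contra! h
  exact hW.not_ge <| two_mul_finrank_le_of_hermForm_eq_zero fun x hx y hy =>
    hermForm_eq_zero_of_forall_self hσ (exists_add_apply_ne_zero hσ₁) h hx hy

theorem exists_mem_ne_zero_hermForm_eq_zero {W : Submodule F (ι → F)} (hW : 1 < finrank F W)
    (u : ι → F) : ∃ w ∈ W, w ≠ 0 ∧ hermForm σ w u = 0 := by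
  have := LinearMap.ker_ne_bot_of_finrank_lt (f := ((hermForm σ).flip u).domRestrict W)
    (by rwa [finrank_self])
  obtain ⟨w, hw, hw0⟩ := (Submodule.ne_bot_iff _).mp this
  exact ⟨w, w.2, by simpa using hw0, hw⟩

theorem linearIndependent_pair_of_hermForm {u w : ι → F} (hu : hermForm σ u u ≠ 0)
    (hw : w ≠ 0) (hwu : hermForm σ w u = 0) : LinearIndependent F ![u, w] := by
  refine LinearIndependent.pair_iff.mpr fun s t hst => ?_
  have hs : s = 0 := by simpa [hwu, hu] using congrArg (hermForm σ · u) hst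
  subst hs
  simpa [hw] using hst

end HermForm

theorem Submodule.eq_span_pair_of_finrank_eq_two {K V : Type*} [Field K] [AddCommGroup V]
    [Module K V] {W : Submodule K V} (hW : finrank K W = 2) {u w : V} (hu : u ∈ W)
    (hw : w ∈ W) (huw : LinearIndependent K ![u, w]) : W = span K {u, w} := by
  have := finite_of_finrank_eq_succ hW
  have hrank := finrank_span_eq_card huw
  rw [range_cons_cons_empty, Fintype.card_fin] at hrank
  refine (eq_of_le_of_finrank_eq ?_ (hrank.trans hW.symm)).symm
  exact span_le.mpr (Set.insert_subset hu (Set.singleton_subset_iff.mpr hw))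

namespace Projectivization

variable {K V : Type*} [Field K] [AddCommGroup V] [Module K V]

theorem natCard_subtype_rep_eq_natCard_chart {u w : V} (huw : LinearIndependent K ![u, w])
    {Q : V → Prop} (hQ : ∀ (c : Kˣ) (v : V), Q (c • v) ↔ Q v) (hu : ¬Q u)
    (hspan : ∀ v, Q v → v ∈ Submodule.span K {u, w}) :
    Nat.card {P : Projectivization K V // Q P.rep} = Nat.card {s : K // Q (w + s • u)} := by
  have hne (s : K) : w + s • u ≠ 0 := fun h =>
    one_ne_zero (LinearIndependent.pair_iff.mp huw s 1 (by rw [one_smul, add_comm, h])).2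
  have hrep (v : V) (hv : v ≠ 0) : Q (mk K v hv).rep ↔ Q v := by
    obtain ⟨a, ha⟩ := exists_smul_eq_mk_rep K v hv
    rw [← ha, hQ]
  symm
  refine Nat.card_congr (Equiv.ofBijective
    (fun s => ⟨mk K (w + s.1 • u) (hne s), (hrep _ _).mpr s.2⟩) ⟨?_, ?_⟩)
  · rintro ⟨s, hs⟩ ⟨t, ht⟩ h
    obtain ⟨a, ha⟩ := (mk_eq_mk_iff' K _ _ _ _).mp (congrArg Subtype.val h)
    obtain ⟨hst, ha1⟩ := LinearIndependent.pair_iff.mp huw (a * t - s) (a - 1)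
      (by linear_combination (norm := module) ha)
    rw [sub_eq_zero] at hst ha1
    rw [Subtype.mk.injEq, ← hst, ha1, one_mul]
  · rintro ⟨P, hP⟩
    obtain ⟨x, y, hxy⟩ := Submodule.mem_span_pair.mp (hspan _ hP)
    have hy : y ≠ 0 := by
      rintro rfl
      have hx : x ≠ 0 := by
        rintro rfl
        exact P.rep_nonzero (by simpa using hxy.symm)
      rw [zero_smul, add_zero] at hxy
      exact hu ((hQ (Units.mk0 x hx) u).mp (hxy ▸ hP))
    have hchart : w + (y⁻¹ * x) • u = (Units.mk0 y hy)⁻¹ • P.rep := by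
      rw [← hxy, Units.smul_def, Units.val_inv_eq_inv_val, Units.val_mk0, smul_add, smul_smul,
        smul_smul, inv_mul_cancel₀ hy, one_smul, add_comm]
    refine ⟨⟨y⁻¹ * x, by rw [hchart, hQ]; exact hP⟩, Subtype.ext ?_⟩
    exact ((mk_eq_mk_iff K _ _ _ P.rep_nonzero).mpr ⟨_, hchart.symm⟩).trans (mk_rep P)

end Projectivization

theorem exists_natCard_isotropic_eq_natCard_norm {ι F : Type*} [Fintype ι] [Field F]
    {σ : F →+* F} (hσ : Function.Involutive σ) {W : Submodule F (ι → F)}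
    (hW : finrank F W = 2) {u : ι → F} (huW : u ∈ W) (hu : hermForm σ u u ≠ 0) :
    ∃ c, σ c = c ∧ Nat.card {P : Projectivization F (ι → F) //
      P.rep ∈ W ∧ hermForm σ P.rep P.rep = 0} = Nat.card {s : F // s * σ s = c} := by
  obtain ⟨w, hwW, hw0, hwu⟩ :=
    exists_mem_ne_zero_hermForm_eq_zero (σ := σ) (by omega : 1 < finrank F W) u
  have huw : hermForm σ u w = 0 := by rw [← apply_hermForm hσ w u, hwu, map_zero]
  have hind := linearIndependent_pair_of_hermForm hu hw0 hwu
  have hspan := Submodule.eq_span_pair_of_finrank_eq_two hW huW hwW hind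
  refine ⟨-(hermForm σ w w / hermForm σ u u), by
    rw [map_neg, map_div₀, apply_hermForm hσ, apply_hermForm hσ], ?_⟩
  rw [Projectivization.natCard_subtype_rep_eq_natCard_chart
    (Q := fun v => v ∈ W ∧ hermForm σ v v = 0) hind
    (fun a v => by
      rw [Submodule.smul_mem_iff', Units.smul_def, hermForm_smul_self_eq_zero_iff a.ne_zero])
    (fun h => hu h.2) (fun v hv => hspan ▸ hv.1)]
  refine Nat.card_congr (Equiv.subtypeEquivRight fun s => ?_)
  rw [hermForm_add_smul_add_smul, hwu, huw, ← neg_div, eq_div_iff hu]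
  simp only [W.add_mem hwW (W.smul_mem s huW), true_and]
  constructor <;> intro h <;> linear_combination h

theorem IsCyclic.natCard_pow_eq {G : Type*} [CommGroup G] [IsCyclic G] [Finite G] {d e : ℕ}
    (hG : Nat.card G = d * e) {c : G} (hc : c ^ e = 1) : Nat.card {x : G // x ^ d = c} = d := by
  -- the `d`-th powers are exactly the kernel of `x ↦ x ^ e`, since both subgroups have order `e`
  have hrange : (powMonoidHom d : G →* G).range = (powMonoidHom e).ker := by
    refine Subgroup.eq_of_le_of_card_ge ?_ ?_
    · rintro _ ⟨x, rfl⟩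
      simp [← pow_mul, ← hG, pow_card_eq_one']
    · have hd : d ≠ 0 := by rintro rfl; exact Nat.card_pos.ne' (by simpa using hG)
      rw [IsCyclic.card_powMonoidHom_range, IsCyclic.card_powMonoidHom_ker, hG,
        Nat.gcd_mul_right_left, Nat.gcd_mul_left_left, Nat.mul_div_cancel_left _ (by omega)]
  obtain ⟨x₀, hx₀⟩ : c ∈ (powMonoidHom d : G →* G).range := hrange ▸ hc
  calc Nat.card {x : G // x ^ d = c}
      = Nat.card (powMonoidHom d : G →* G).ker :=
        Nat.card_congr <| Equiv.subtypeEquiv (Equiv.mulRight x₀⁻¹) fun x => by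
          simp [mul_pow, ← hx₀, mul_inv_eq_one]
    _ = d := by rw [IsCyclic.card_powMonoidHom_ker, hG, Nat.gcd_mul_right_left]

theorem natCard_pow_eq_zero {M₀ : Type*} [MonoidWithZero M₀] [NoZeroDivisors M₀] {n : ℕ}
    (hn : n ≠ 0) : Nat.card {s : M₀ // s ^ n = 0} = 1 := by
  rw [Nat.card_congr (Equiv.subtypeEquivRight fun s => pow_eq_zero_iff hn), Nat.card_unique]

namespace FiniteField

variable {F : Type*} [Field F] [Fintype F] {q : ℕ}

theorem exists_pow_ne_self (hF : Fintype.card F = q ^ 2) : ∃ x : F, x ^ q ≠ x := by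
  by_contra! h
  have hq : 2 ≤ q := by
    have := hF ▸ Fintype.one_lt_card (α := F)
    nlinarith
  have hdvd : q ^ 2 - 1 ∣ q - 1 := by
    refine hF ▸ (forall_pow_eq_one_iff F (q - 1)).mp fun x => Units.ext ?_
    simpa [x.ne_zero] using (pow_sub_one_mul (by omega) (x : F)).trans (h x)
  have := Nat.le_of_dvd (by omega) hdvd
  have : q < q ^ 2 := by nlinarith
  omega

theorem natCard_pow_succ_eq_of_pow_eq_self (hF : Fintype.card F = q ^ 2) {c : F}
    (hc0 : c ≠ 0) (hc : c ^ q = c) : Nat.card {s : F // s ^ (q + 1) = c} = q + 1 := by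
  have hq : q ≠ 0 := by rintro rfl; simp at hF
  have hcq : Units.mk0 c hc0 ^ (q - 1) = 1 := Units.ext <|
    mul_right_cancel₀ hc0 (by simpa [pow_sub_one_mul hq] using hc)
  calc Nat.card {s : F // s ^ (q + 1) = c}
      = Nat.card {x : Fˣ // x ^ (q + 1) = Units.mk0 c hc0} := Nat.card_congr
        { toFun s := ⟨Units.mk0 s.1 fun h => hc0 (by simpa [h] using s.2.symm),
            Units.ext (by simpa using s.2)⟩
          invFun x := ⟨x.1, by simpa using congrArg Units.val x.2⟩
          left_inv _ := rfl
          right_inv _ := Subtype.ext (Units.ext rfl) }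
    _ = q + 1 := IsCyclic.natCard_pow_eq (by
        rw [Nat.card_units, Nat.card_eq_fintype_card, hF, ← one_pow 2, Nat.sq_sub_sq, one_pow])
        hcq

end FiniteField

theorem line_meets_hermitian_curve_in_one_or_q_add_one_points_general
    (p n q : ℕ) (hp : p.Prime) (hq : q = p ^ n)
    (F : Type) [Field F] [Fintype F] (hF : Fintype.card F = q ^ 2)
    (W : Submodule F (Fin 3 → F)) (hW : Module.finrank F W = 2) :
    Nat.card {P : Projectivization F (Fin 3 → F) //
        P.rep ∈ W ∧ P.rep 0 ^ (q + 1) + P.rep 1 ^ (q + 1) + P.rep 2 ^ (q + 1) = 0} = 1 ∨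
    Nat.card {P : Projectivization F (Fin 3 → F) //
        P.rep ∈ W ∧ P.rep 0 ^ (q + 1) + P.rep 1 ^ (q + 1) + P.rep 2 ^ (q + 1) = 0} = q + 1 := by
  have := Fact.mk hp
  have : CharP F p := charP_of_card_eq_prime_pow (f := n * 2) (by rw [hF, hq, pow_mul])
  set σ := iterateFrobenius F p n
  have hσq (x : F) : σ x = x ^ q := by rw [hq]; exact iterateFrobenius_def p n x
  have hσ : Function.Involutive σ := fun x => by
    rw [hσq, hσq, ← pow_mul, ← sq, ← hF, FiniteField.pow_card]
  have hσ₁ : σ ≠ RingHom.id F := fun h => by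
    obtain ⟨x, hx⟩ := FiniteField.exists_pow_ne_self hF
    exact hx (by rw [← hσq, h, RingHom.id_apply])
  obtain ⟨u, huW, hu⟩ := exists_mem_hermForm_self_ne_zero hσ hσ₁ (W := W) (by simp [hW])
  obtain ⟨c, hc, hcard⟩ := exists_natCard_isotropic_eq_natCard_norm hσ hW huW hu
  have hcurve (v : Fin 3 → F) :
      v 0 ^ (q + 1) + v 1 ^ (q + 1) + v 2 ^ (q + 1) = hermForm σ v v := by
    simp [hermForm_apply, Fin.sum_univ_three, hσq, pow_succ']
  have hnorm (s : F) : s * σ s = s ^ (q + 1) := by rw [hσq, pow_succ']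
  simp only [hcurve, hcard, hnorm]
  rw [hσq] at hc
  by_cases hc0 : c = 0
  · exact .inl (hc0 ▸ natCard_pow_eq_zero q.succ_ne_zero)
  · exact .inr (FiniteField.natCard_pow_succ_eq_of_pow_eq_self hF hc0 hc)

/-- Let `q = p ^ n` and `F` be a finite field with `q²` elements. Every line
of `PG(2, F)` (the projectivization of a 2-dimensional `F`-linear subspace of `F³`) meets the
Hermitian curve `H_q(F) : x^(q+1) + y^(q+1) + t^(q+1) = 0` in either exactly `1` or exactly
`q + 1` points. -/
theorem line_meets_hermitian_curve_in_one_or_q_add_one_points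
    (p n q : ℕ) (hp : p.Prime) (hn : 1 ≤ n) (hq : q = p ^ n)
    (F : Type) [Field F] [Fintype F] (hF : Fintype.card F = q ^ 2)
    (W : Submodule F (Fin 3 → F)) (hW : Module.finrank F W = 2) :
    Nat.card {P : Projectivization F (Fin 3 → F) //
        P.rep ∈ W ∧ P.rep 0 ^ (q + 1) + P.rep 1 ^ (q + 1) + P.rep 2 ^ (q + 1) = 0} = 1 ∨
    Nat.card {P : Projectivization F (Fin 3 → F) //
        P.rep ∈ W ∧ P.rep 0 ^ (q + 1) + P.rep 1 ^ (q + 1) + P.rep 2 ^ (q + 1) = 0} = q + 1 :=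
  line_meets_hermitian_curve_in_one_or_q_add_one_points_general p n q hp hq F hF W hW
end

section
/- Let p be a prime, n ≥ 1, q = p^n, and let F be a finite field with q² elements. Let P = [a : b : c] be a point of PG(2,F) with a^{q+1} + b^{q+1} + c^{q+1} = 0. Then the polar line of P, namely the line with equation a^q X + b^q Y + c^q T = 0, meets the Hermitian curve H_q(F) in exactly one point, namely P itself; that is, the polar line of a rational point of H_q is the tangent line at that point. -/
/-!
Write `σ t = t ^ q`; on a field with `q²` elements it is an involutive automorphism, and the
curve is the isotropic cone of the Hermitian form `h(x, y) = σ(y) ⬝ᵥ x`. If `x` lies on the curve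
and on the polar line of `a`, then `σ(a)` and `σ(x)` are both dot-orthogonal to `a` and `x`. Were
`a` and `x` independent, this would force `σ(a)` and `σ(x)` to be parallel to `x ⨯₃ a ≠ 0`, so
`σ(x ⨯₃ a) = σ(x) ⨯₃ σ(a) = 0`, which is absurd. Hence `x ⨯₃ a = 0`, i.e. `[x] = [a]`.
-/

open Matrix Projectivization
open scoped LinearAlgebra.Projectivization

section Field

variable {K : Type*} [Field K]

theorem exists_smul_eq_of_cross_eq_zero {u w : Fin 3 → K} (hw : w ≠ 0) (h : w ⨯₃ u = 0) :
    ∃ s : K, s • w = u := by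
  by_contra! hne
  exact crossProduct_ne_zero_iff_linearIndependent.mpr
    ((LinearIndependent.pair_iff' hw).mpr hne) h

theorem cross_eq_zero_of_cross_eq_zero {u v w : Fin 3 → K} (hw : w ≠ 0)
    (hu : w ⨯₃ u = 0) (hv : w ⨯₃ v = 0) : u ⨯₃ v = 0 := by
  obtain ⟨s, rfl⟩ := exists_smul_eq_of_cross_eq_zero hw hu
  obtain ⟨t, rfl⟩ := exists_smul_eq_of_cross_eq_zero hw hv
  simp [_root_.cross_self]

theorem RingHom.comp_crossProduct (σ : K →+* K) (u v : Fin 3 → K) :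
    σ ∘ (u ⨯₃ v) = (σ ∘ u) ⨯₃ (σ ∘ v) := by
  ext i
  fin_cases i <;> simp [cross_apply]

theorem RingHom.comp_smul_vec {ι : Type*} (σ : K →+* K) (s : K) (u : ι → K) :
    σ ∘ (s • u) = σ s • (σ ∘ u) := by
  ext i
  simp

variable (σ : K →+* K) (hσ : ∀ t, σ (σ t) = t)
include hσ

theorem map_comp_dotProduct_of_involutive {ι : Type*} [Fintype ι] (u v : ι → K) :
    σ ((σ ∘ u) ⬝ᵥ v) = (σ ∘ v) ⬝ᵥ u := by
  rw [RingHom.map_dotProduct, dotProduct_comm]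
  simp [Function.comp_def, hσ]

theorem cross_eq_zero_of_isotropic_of_polar {a x : Fin 3 → K} (ha : (σ ∘ a) ⬝ᵥ a = 0)
    (hx : (σ ∘ x) ⬝ᵥ x = 0) (hax : (σ ∘ a) ⬝ᵥ x = 0) : x ⨯₃ a = 0 := by
  have hxa : (σ ∘ x) ⬝ᵥ a = 0 := by
    rw [← map_comp_dotProduct_of_involutive σ hσ, hax, map_zero]
  by_contra hw
  have ha' : (x ⨯₃ a) ⨯₃ (σ ∘ a) = 0 := by
    rw [cross_cross_eq_smul_sub_smul, dotProduct_comm x, dotProduct_comm a, hax, ha]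
    simp
  have hx' : (x ⨯₃ a) ⨯₃ (σ ∘ x) = 0 := by
    rw [cross_cross_eq_smul_sub_smul, dotProduct_comm x, dotProduct_comm a, hxa, hx]
    simp
  have hσw : σ ∘ (x ⨯₃ a) = 0 := by
    rw [RingHom.comp_crossProduct, cross_eq_zero_of_cross_eq_zero hw hx' ha']
  exact hw <| funext fun i ↦ by simpa using congrFun hσw i

theorem polar_and_isotropic_iff_eq_mk {a : Fin 3 → K} (ha0 : a ≠ 0) (ha : (σ ∘ a) ⬝ᵥ a = 0)
    (P : ℙ K (Fin 3 → K)) :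
    ((σ ∘ a) ⬝ᵥ P.rep = 0 ∧ (σ ∘ P.rep) ⬝ᵥ P.rep = 0) ↔ P = mk K a ha0 := by
  conv_rhs => rw [← P.mk_rep]
  rw [mk_eq_mk_iff_crossProduct_eq_zero]
  constructor
  · rintro ⟨hline, hcurve⟩
    exact cross_eq_zero_of_isotropic_of_polar σ hσ ha hcurve hline
  · intro h
    obtain ⟨s, hs⟩ := exists_smul_eq_of_cross_eq_zero ha0 (by rw [← cross_anticomm, h, neg_zero])
    rw [← hs, RingHom.comp_smul_vec, dotProduct_smul, smul_dotProduct, dotProduct_smul, ha]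
    simp

end Field

theorem polar_line_of_point_on_hermitian_curve_is_tangent_general
    (p n q : ℕ) (hp : p.Prime) (hq : q = p ^ n)
    (F : Type) [Field F] [Fintype F] (hF : Fintype.card F = q ^ 2)
    (a b c : F) (hv : ![a, b, c] ≠ 0)
    (habc : a ^ (q + 1) + b ^ (q + 1) + c ^ (q + 1) = 0) :
    ∀ P : Projectivization F (Fin 3 → F),
      (a ^ q * P.rep 0 + b ^ q * P.rep 1 + c ^ q * P.rep 2 = 0 ∧
        P.rep 0 ^ (q + 1) + P.rep 1 ^ (q + 1) + P.rep 2 ^ (q + 1) = 0) ↔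
      P = Projectivization.mk F ![a, b, c] hv := by
  have : Fact p.Prime := ⟨hp⟩
  have : CharP F p := charP_of_card_eq_prime_pow (f := n * 2) (by rw [hF, hq, pow_mul])
  set σ := iterateFrobenius F p n
  have hσ : ∀ t, σ t = t ^ q := fun t ↦ by rw [hq]; rfl
  have hσσ : ∀ t, σ (σ t) = t := fun t ↦ by
    rw [hσ, hσ, ← pow_mul, ← sq, ← hF, FiniteField.pow_card]
  have hform : ∀ v w : Fin 3 → F,
      (σ ∘ v) ⬝ᵥ w = v 0 ^ q * w 0 + v 1 ^ q * w 1 + v 2 ^ q * w 2 :=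
    fun v w ↦ by simp [vec3_dotProduct, hσ]
  have ha : (σ ∘ ![a, b, c]) ⬝ᵥ ![a, b, c] = 0 := by simpa [hform, pow_succ] using habc
  intro P
  rw [← polar_and_isotropic_iff_eq_mk σ hσσ hv ha P, hform, hform]
  simp [pow_succ]

/-- Let `q = p ^ n` and `F` be a finite field with `q²` elements. If
`P = [a : b : c]` is a point of `PG(2, F)` lying on the Hermitian curve
`x^(q+1) + y^(q+1) + t^(q+1) = 0`, then the polar line `a^q X + b^q Y + c^q T = 0` of `P`
meets the Hermitian curve in exactly one point, namely `P` itself. -/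
theorem polar_line_of_point_on_hermitian_curve_is_tangent
    (p n q : ℕ) (hp : p.Prime) (hn : 1 ≤ n) (hq : q = p ^ n)
    (F : Type) [Field F] [Fintype F] (hF : Fintype.card F = q ^ 2)
    (a b c : F) (hv : ![a, b, c] ≠ 0)
    (habc : a ^ (q + 1) + b ^ (q + 1) + c ^ (q + 1) = 0) :
    ∀ P : Projectivization F (Fin 3 → F),
      (a ^ q * P.rep 0 + b ^ q * P.rep 1 + c ^ q * P.rep 2 = 0 ∧
        P.rep 0 ^ (q + 1) + P.rep 1 ^ (q + 1) + P.rep 2 ^ (q + 1) = 0) ↔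
      P = Projectivization.mk F ![a, b, c] hv :=
  polar_line_of_point_on_hermitian_curve_is_tangent_general p n q hp hq F hF a b c hv habc
end

section
/- Let p be a prime, n ≥ 1, q = p^n, and let F be a finite field with q² elements. Let R = [a : b : c] be a point of PG(2,F) with a^{q+1} + b^{q+1} + c^{q+1} ≠ 0, i.e. a point not on the Hermitian curve. Then the polar line of R, namely the line with equation a^q X + b^q Y + c^q T = 0, contains exactly q + 1 points of H_q(F); that is, the polar line of a rational point off H_q is a chord of H_q(F). -/
/-!
Over a field `K` with `q²` elements, `x ↦ x ^ q` is an involutive automorphism, and the norm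
`x ↦ x ^ (q + 1)` maps `Kˣ` onto the `q - 1` nonzero elements fixed by it, each with exactly
`q + 1` preimages (`Kˣ` is cyclic of order `(q + 1)(q - 1)`).

Let `h(v, w) = ∑ vᵢ wᵢ^q`. A point `R` off the curve has `h(R, R) ≠ 0`. Choosing a coordinate
with `Rᵢ ≠ 0` and solving the polar equation `h(v, R) = 0` for `vᵢ` turns `h(v, v)` into a binary
Hermitian form in the other two coordinates, of discriminant `Rᵢ^(q+1) h(R, R) ≠ 0`. Completing the
square (after a shear and a swap if the first diagonal coefficient vanishes) brings it to
`d x^(q+1) + y^(q+1)` with `d ≠ 0` fixed by Frobenius; by the norm count it has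
`1 + (q + 1)(q² - 1)` zeros. The `(q + 1)(q² - 1)` nonzero isotropic vectors of the polar plane fall
into classes of size `q² - 1`, one for each of the `q + 1` points of the chord.
-/

open scoped LinearAlgebra.Projectivization

lemma Projectivization.card_subtype_rep_mul_card_units_s4 {k V : Type*} [Field k] [AddCommGroup V]
    [Module k V] (S : V → Prop) (hS : ∀ (c : k) (v : V), c ≠ 0 → (S (c • v) ↔ S v)) :
    Nat.card {P : ℙ k V // S P.rep} * Nat.card kˣ = Nat.card {v : V // v ≠ 0 ∧ S v} := by
  have hrep : ∀ v : {v : V // v ≠ 0}, S (Projectivization.mk k v.1 v.2).rep ↔ S v.1 := by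
    intro v
    obtain ⟨c, hc⟩ := Projectivization.exists_smul_eq_mk_rep k v.1 v.2
    rw [← hc, Units.smul_def, hS _ _ c.ne_zero]
  let e := (nonZeroEquivProjectivizationProdUnits k V).subtypeEquiv
    (p := fun v => S v.1) (q := fun x => S x.1.rep) (fun v => (hrep v).symm)
  rw [← Nat.card_prod, ← Nat.card_congr (Equiv.prodSubtypeFstEquivSubtypeProd
      (p := fun P : ℙ k V => S P.rep)),
    ← Nat.card_congr e, Nat.card_congr (Equiv.subtypeSubtypeEquivSubtypeInter _ _)]

lemma Nat.card_subtype_ne_zero_and_add_one {V : Type*} [Zero V] [Finite V] {S : V → Prop}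
    (h0 : S 0) : Nat.card {v : V // v ≠ 0 ∧ S v} + 1 = Nat.card {v : V // S v} :=
  (congrArg (· + 1) (Nat.card_congr (Equiv.subtypeEquivRight fun v => by simp [and_comm]))).trans
    (Set.ncard_sdiff_singleton_add_one (s := {v | S v}) h0)

section FiniteField

variable {K : Type*} [Field K] [Fintype K] {q : ℕ}

lemma one_lt_of_card_eq_sq (hK : Fintype.card K = q ^ 2) : 1 < q := by
  have := Fintype.one_lt_card (α := K)
  rw [hK] at this
  by_contra h
  interval_cases q <;> simp at this

lemma pow_pow_of_card_eq_sq (hK : Fintype.card K = q ^ 2) (x : K) : (x ^ q) ^ q = x := by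
  rw [← pow_mul, ← sq, ← hK, FiniteField.pow_card]

lemma pow_succ_pow_of_card_eq_sq (hK : Fintype.card K = q ^ 2) (x : K) :
    (x ^ (q + 1)) ^ q = x ^ (q + 1) := by
  rw [pow_succ, mul_pow, pow_pow_of_card_eq_sq hK, ← pow_succ', ← pow_succ]

lemma neg_pow_of_card_eq_sq (hK : Fintype.card K = q ^ 2)
    (hfrob : ∀ x y : K, (x + y) ^ q = x ^ q + y ^ q) (x : K) : (-x) ^ q = -x ^ q := by
  rw [eq_neg_iff_add_eq_zero, add_comm, ← hfrob, add_neg_cancel,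
    zero_pow (one_lt_of_card_eq_sq hK).ne_bot]

lemma sub_pow_of_card_eq_sq (hK : Fintype.card K = q ^ 2)
    (hfrob : ∀ x y : K, (x + y) ^ q = x ^ q + y ^ q) (x y : K) : (x - y) ^ q = x ^ q - y ^ q := by
  rw [sub_eq_add_neg, hfrob, neg_pow_of_card_eq_sq hK hfrob, ← sub_eq_add_neg]

lemma card_units_of_card_eq_sq (hK : Fintype.card K = q ^ 2) :
    Nat.card Kˣ = (q + 1) * (q - 1) := by
  rw [Nat.card_units, Nat.card_eq_fintype_card, hK, ← Nat.sq_sub_sq, one_pow]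

lemma range_powMonoidHom_succ_eq_ker (hK : Fintype.card K = q ^ 2) :
    (powMonoidHom (q + 1) : Kˣ →* Kˣ).range = (powMonoidHom (q - 1)).ker := by
  have hq := one_lt_of_card_eq_sq hK
  apply Subgroup.eq_of_le_of_card_ge
  · rintro _ ⟨x, rfl⟩
    simp only [MonoidHom.mem_ker, powMonoidHom_apply, ← pow_mul,
      ← card_units_of_card_eq_sq hK, pow_card_eq_one']
  · rw [IsCyclic.card_powMonoidHom_range, IsCyclic.card_powMonoidHom_ker,
      card_units_of_card_eq_sq hK, Nat.gcd_mul_left_left, Nat.gcd_mul_right_left,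
      Nat.mul_div_cancel_left _ (by omega)]

lemma card_pow_succ_eq (hK : Fintype.card K = q ^ 2) {μ : K} (hμ : μ ≠ 0)
    (hμq : μ ^ q = μ) : Nat.card {x : K // x ^ (q + 1) = μ} = q + 1 := by
  have hq := one_lt_of_card_eq_sq hK
  obtain ⟨w, hw⟩ : Units.mk0 μ hμ ∈ (powMonoidHom (q + 1) : Kˣ →* Kˣ).range := by
    rw [range_powMonoidHom_succ_eq_ker hK, MonoidHom.mem_ker, powMonoidHom_apply, ← Units.val_inj]
    refine mul_right_cancel₀ hμ ?_
    rw [Units.val_pow_eq_pow_val, Units.val_mk0, Units.val_one, one_mul, ← pow_succ,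
      Nat.sub_add_cancel hq.le, hμq]
  have hwμ : (w : K) ^ (q + 1) = μ := by simpa [← Units.val_inj] using hw
  let e : (powMonoidHom (q + 1) : Kˣ →* Kˣ).ker ≃ {x : K // x ^ (q + 1) = μ} :=
    { toFun k := ⟨((k * w : Kˣ) : K), by
        have hk : (k : Kˣ) ^ (q + 1) = 1 := k.2
        rw [Units.val_mul, mul_pow, ← Units.val_pow_eq_pow_val, hk, Units.val_one, one_mul, hwμ]⟩
      invFun x := ⟨Units.mk0 (x / w) (by
        refine div_ne_zero (fun h => hμ ?_) w.ne_zero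
        rw [← x.2, h, zero_pow (Nat.succ_ne_zero q)]), by
        rw [MonoidHom.mem_ker, powMonoidHom_apply, ← Units.val_inj]
        simp [div_pow, x.2, hwμ, hμ]⟩
      left_inv k := by ext; simp
      right_inv x := by ext; simp }
  rw [← Nat.card_congr e, IsCyclic.card_powMonoidHom_ker, card_units_of_card_eq_sq hK,
    Nat.gcd_mul_right_left]

lemma exists_add_pow_ne_zero (hK : Fintype.card K = q ^ 2) : ∃ w : K, w + w ^ q ≠ 0 := by
  classical
  have hq := one_lt_of_card_eq_sq hK
  by_contra! h
  have hsub : Finset.univ.erase (0 : K) ⊆ (Polynomial.nthRoots (q - 1) (-1 : K)).toFinset := by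
    intro x hx
    rw [Multiset.mem_toFinset, Polynomial.mem_nthRoots (by omega)]
    refine mul_right_cancel₀ (Finset.ne_of_mem_erase hx) ?_
    rw [← pow_succ, Nat.sub_add_cancel hq.le, neg_one_mul, eq_neg_iff_add_eq_zero, add_comm, h]
  have := (Finset.card_le_card hsub).trans
    ((Multiset.toFinset_card_le _).trans (Polynomial.card_nthRoots _ _))
  rw [Finset.card_erase_of_mem (Finset.mem_univ 0), Finset.card_univ, hK] at this
  have : q ≤ q ^ 2 - q := by rw [sq]; exact Nat.le_sub_of_add_le (by nlinarith)
  omega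

end FiniteField

section BinaryHermitian

variable {K : Type*} [Field K] {q : ℕ}

/-- The Hermitian form on `K × K` with Gram matrix `((e, f), (f ^ q, g))`. -/
def binaryHermitian (q : ℕ) (e f g : K) (v : K × K) : K :=
  e * v.1 ^ (q + 1) + f * v.1 * v.2 ^ q + f ^ q * v.1 ^ q * v.2 + g * v.2 ^ (q + 1)

variable [Fintype K]

lemma card_diagonal_hermitian_zeros (hK : Fintype.card K = q ^ 2)
    (hfrob : ∀ x y : K, (x + y) ^ q = x ^ q + y ^ q) {d : K} (hd : d ≠ 0) (hdq : d ^ q = d) :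
    Nat.card {v : K × K // d * v.1 ^ (q + 1) + v.2 ^ (q + 1) = 0} =
      (q + 1) * (q ^ 2 - 1) + 1 := by
  classical
  have hfiber : ∀ x : K, x ≠ 0 →
      Nat.card {y : K // d * x ^ (q + 1) + y ^ (q + 1) = 0} = q + 1 := by
    intro x hx
    simp_rw [add_eq_zero_iff_eq_neg']
    refine card_pow_succ_eq hK (neg_ne_zero.2 (mul_ne_zero hd (pow_ne_zero _ hx))) ?_
    rw [neg_pow_of_card_eq_sq hK hfrob, mul_pow, hdq, pow_succ_pow_of_card_eq_sq hK]
  have hzero : Nat.card {y : K // d * 0 ^ (q + 1) + y ^ (q + 1) = 0} = 1 := by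
    simp only [zero_pow (Nat.succ_ne_zero q), mul_zero, zero_add,
      pow_eq_zero_iff (Nat.succ_ne_zero q), Nat.card_unique]
  rw [Nat.card_congr (Equiv.subtypeProdEquivSigmaSubtype fun x y =>
      d * x ^ (q + 1) + y ^ (q + 1) = 0),
    Nat.card_sigma, ← Finset.add_sum_erase _ _ (Finset.mem_univ 0), hzero,
    Finset.sum_congr rfl fun x hx => hfiber x (Finset.ne_of_mem_erase hx), Finset.sum_const,
    Finset.card_erase_of_mem (Finset.mem_univ 0), Finset.card_univ, hK, smul_eq_mul]
  ring

lemma card_binaryHermitian_zeros_of_ne_zero (hK : Fintype.card K = q ^ 2)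
    (hfrob : ∀ x y : K, (x + y) ^ q = x ^ q + y ^ q) {e f g : K} (he : e ≠ 0) (heq : e ^ q = e)
    (hgq : g ^ q = g) (hD : e * g - f ^ (q + 1) ≠ 0) :
    Nat.card {v : K × K // binaryHermitian q e f g v = 0} = (q + 1) * (q ^ 2 - 1) + 1 := by
  have hDq : (e * g - f ^ (q + 1)) ^ q = e * g - f ^ (q + 1) := by
    rw [sub_pow_of_card_eq_sq hK hfrob, mul_pow, heq, hgq, pow_succ_pow_of_card_eq_sq hK]
  have hsquare : ∀ x y : K, e * binaryHermitian q e f g (x, y) =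
      (e * g - f ^ (q + 1)) * y ^ (q + 1) + (e * x + f ^ q * y) ^ (q + 1) := by
    intro x y
    rw [pow_succ' (e * x + f ^ q * y), hfrob, mul_pow, mul_pow, heq, pow_pow_of_card_eq_sq hK,
      binaryHermitian, pow_succ', pow_succ' y, pow_succ' f]
    ring
  let σ : K × K ≃ K × K :=
    { toFun v := (v.2, e * v.1 + f ^ q * v.2)
      invFun w := ((w.2 - f ^ q * w.1) / e, w.1)
      left_inv v := by ext <;> simp [he]
      right_inv w := by ext <;> simp [mul_div_cancel₀ _ he] }
  rw [← card_diagonal_hermitian_zeros hK hfrob hD hDq]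
  refine Nat.card_congr (σ.subtypeEquiv fun ⟨x, y⟩ => ?_)
  rw [← mul_eq_zero_iff_left he, hsquare]
  rfl

lemma card_binaryHermitian_zeros (hK : Fintype.card K = q ^ 2)
    (hfrob : ∀ x y : K, (x + y) ^ q = x ^ q + y ^ q) {e f g : K} (heq : e ^ q = e)
    (hgq : g ^ q = g) (hD : e * g - f ^ (q + 1) ≠ 0) :
    Nat.card {v : K × K // binaryHermitian q e f g v = 0} = (q + 1) * (q ^ 2 - 1) + 1 := by
  rcases ne_or_eq e 0 with he | rfl
  · exact card_binaryHermitian_zeros_of_ne_zero hK hfrob he heq hgq hD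
  have hf : f ≠ 0 := by
    rintro rfl
    simp [zero_pow (Nat.succ_ne_zero q)] at hD
  -- after the shear `(u, v) ↦ (v + s u, u)`, this is the first diagonal coefficient
  obtain ⟨s, hs⟩ : ∃ s : K, g + f * s + (f * s) ^ q ≠ 0 := by
    rcases ne_or_eq g 0 with hg | rfl
    · exact ⟨0, by simpa [zero_pow (one_lt_of_card_eq_sq hK).ne_bot] using hg⟩
    obtain ⟨w, hw⟩ := exists_add_pow_ne_zero hK
    exact ⟨w / f, by rwa [mul_div_cancel₀ _ hf, zero_add]⟩
  have hsq : (g + f * s + (f * s) ^ q) ^ q = g + f * s + (f * s) ^ q := by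
    rw [hfrob, hfrob, hgq, pow_pow_of_card_eq_sq hK]
    ring
  have hD' : (g + f * s + (f * s) ^ q) * 0 - (f ^ q) ^ (q + 1) ≠ 0 := by
    rw [mul_zero, ← pow_mul, mul_comm q, pow_mul, pow_succ_pow_of_card_eq_sq hK]
    rwa [zero_mul] at hD
  have hshear : ∀ u v : K, binaryHermitian q 0 f g (v + s * u, u) =
      binaryHermitian q (g + f * s + (f * s) ^ q) (f ^ q) 0 (u, v) := by
    intro u v
    simp only [binaryHermitian, hfrob, mul_pow, pow_pow_of_card_eq_sq hK, pow_succ' u]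
    ring
  let σ : K × K ≃ K × K :=
    { toFun w := (w.2 + s * w.1, w.1)
      invFun v := (v.2, v.1 - s * v.2)
      left_inv w := by simp
      right_inv v := by simp }
  rw [← card_binaryHermitian_zeros_of_ne_zero hK hfrob hs hsq heq hD']
  exact (Nat.card_congr (σ.subtypeEquiv fun ⟨u, v⟩ => by rw [← hshear]; rfl)).symm

end BinaryHermitian

section HermitianForm

variable {K : Type*} [Field K] {q : ℕ} {ι : Type*} [Fintype ι]

def hermitianForm (q : ℕ) (v w : ι → K) : K := ∑ i, v i * w i ^ q

lemma hermitianForm_smul_left (c : K) (v w : ι → K) :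
    hermitianForm q (c • v) w = c * hermitianForm q v w := by
  simp only [hermitianForm, Finset.mul_sum, Pi.smul_apply, smul_eq_mul, mul_assoc]

lemma hermitianForm_smul_right (c : K) (v w : ι → K) :
    hermitianForm q v (c • w) = c ^ q * hermitianForm q v w := by
  simp only [hermitianForm, Finset.mul_sum, Pi.smul_apply, smul_eq_mul, mul_pow]
  exact Finset.sum_congr rfl fun i _ => by ring

lemma hermitianForm_comp (σ : ι ≃ ι) (v w : ι → K) :
    hermitianForm q (v ∘ σ) (w ∘ σ) = hermitianForm q v w :=
  σ.sum_comp fun i => v i * w i ^ q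

/-- For `R 2 ≠ 0`, the vector of the plane `h(·, R) = 0` lying over `(x, y)`. -/
def polarLift (q : ℕ) (R : Fin 3 → K) (x y : K) : Fin 3 → K :=
  ![x, y, -(x * R 0 ^ q + y * R 1 ^ q) / R 2 ^ q]

lemma hermitianForm_polarLift {R : Fin 3 → K} (hR : R 2 ≠ 0) (x y : K) :
    hermitianForm q (polarLift q R x y) R = 0 := by
  simp only [hermitianForm, polarLift, Fin.sum_univ_three, Matrix.cons_val_zero,
    Matrix.cons_val_one, Matrix.cons_val_two, Matrix.tail_cons, Matrix.head_cons,
    div_mul_cancel₀ _ (pow_ne_zero q hR)]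
  ring

lemma polarLift_eq {R v : Fin 3 → K} (hR : R 2 ≠ 0) (hv : hermitianForm q v R = 0) :
    polarLift q R (v 0) (v 1) = v := by
  simp only [hermitianForm, Fin.sum_univ_three] at hv
  ext i
  fin_cases i
  · rfl
  · rfl
  · show -(v 0 * R 0 ^ q + v 1 * R 1 ^ q) / R 2 ^ q = v 2
    rw [div_eq_iff (pow_ne_zero q hR)]
    linear_combination -hv

end HermitianForm

section PolarLine

variable {K : Type*} [Field K] [Fintype K] {q : ℕ}

lemma mul_hermitianForm_eq_binaryHermitian (hK : Fintype.card K = q ^ 2)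
    (hfrob : ∀ x y : K, (x + y) ^ q = x ^ q + y ^ q) {R v : Fin 3 → K}
    (hv : hermitianForm q v R = 0) :
    R 2 ^ (q + 1) * hermitianForm q v v = binaryHermitian q (R 0 ^ (q + 1) + R 2 ^ (q + 1))
      (R 0 ^ q * R 1) (R 1 ^ (q + 1) + R 2 ^ (q + 1)) (v 0, v 1) := by
  simp only [hermitianForm, Fin.sum_univ_three] at hv ⊢
  have hvq := congrArg (· ^ q) hv
  simp only [hfrob, mul_pow, pow_pow_of_card_eq_sq hK, zero_pow (one_lt_of_card_eq_sq hK).ne_bot]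
    at hvq
  simp only [binaryHermitian, mul_pow, pow_pow_of_card_eq_sq hK]
  linear_combination (R 2 * v 2 ^ q) * hv - (v 0 * R 0 ^ q + v 1 * R 1 ^ q) * hvq

lemma card_polar_hermitian_zeros_of_ne_zero (hK : Fintype.card K = q ^ 2)
    (hfrob : ∀ x y : K, (x + y) ^ q = x ^ q + y ^ q) {R : Fin 3 → K} (hR : R 2 ≠ 0)
    (hRR : hermitianForm q R R ≠ 0) :
    Nat.card {v : Fin 3 → K // hermitianForm q v R = 0 ∧ hermitianForm q v v = 0} =
      (q + 1) * (q ^ 2 - 1) + 1 := by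
  have hdisc : (R 0 ^ (q + 1) + R 2 ^ (q + 1)) * (R 1 ^ (q + 1) + R 2 ^ (q + 1)) -
      (R 0 ^ q * R 1) ^ (q + 1) = R 2 ^ (q + 1) * hermitianForm q R R := by
    simp only [hermitianForm, Fin.sum_univ_three, mul_pow, ← pow_mul, mul_comm q (q + 1)]
    simp only [pow_mul, pow_succ_pow_of_card_eq_sq hK]
    ring
  have hfixed : ∀ x y : K, (x ^ (q + 1) + y ^ (q + 1)) ^ q = x ^ (q + 1) + y ^ (q + 1) :=
    fun x y => by rw [hfrob, pow_succ_pow_of_card_eq_sq hK, pow_succ_pow_of_card_eq_sq hK]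
  rw [← card_binaryHermitian_zeros hK hfrob (hfixed _ _) (hfixed _ _)
    (by rw [hdisc]; exact mul_ne_zero (pow_ne_zero _ hR) hRR)]
  refine Nat.card_congr
    { toFun v := ⟨(v.1 0, v.1 1), by
        rw [← mul_hermitianForm_eq_binaryHermitian hK hfrob v.2.1, v.2.2, mul_zero]⟩
      invFun w := ⟨polarLift q R w.1.1 w.1.2, hermitianForm_polarLift hR _ _, by
        have hL := hermitianForm_polarLift (q := q) hR w.1.1 w.1.2
        have := (mul_hermitianForm_eq_binaryHermitian hK hfrob hL).trans w.2
        exact (mul_eq_zero.1 this).resolve_left (pow_ne_zero _ hR)⟩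
      left_inv v := Subtype.ext (polarLift_eq hR v.2.1)
      right_inv w := rfl }

lemma card_polar_hermitian_zeros (hK : Fintype.card K = q ^ 2)
    (hfrob : ∀ x y : K, (x + y) ^ q = x ^ q + y ^ q) {R : Fin 3 → K}
    (hRR : hermitianForm q R R ≠ 0) :
    Nat.card {v : Fin 3 → K // hermitianForm q v R = 0 ∧ hermitianForm q v v = 0} =
      (q + 1) * (q ^ 2 - 1) + 1 := by
  obtain ⟨i, hi⟩ : ∃ i, R i ≠ 0 := by
    by_contra! h
    exact hRR (by simp [hermitianForm, h, zero_pow (one_lt_of_card_eq_sq hK).ne_bot])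
  let σ := Equiv.swap i 2
  let e : (Fin 3 → K) ≃ (Fin 3 → K) :=
    ⟨(· ∘ σ), (· ∘ σ), fun v => by ext; simp [σ], fun v => by ext; simp [σ]⟩
  rw [← card_polar_hermitian_zeros_of_ne_zero hK hfrob (R := R ∘ σ) (by simpa [σ] using hi)
    (by rwa [hermitianForm_comp])]
  exact Nat.card_congr (e.subtypeEquiv fun v => by
    simp only [e, Equiv.coe_fn_mk, hermitianForm_comp])

lemma card_polar_hermitian_points (hK : Fintype.card K = q ^ 2)
    (hfrob : ∀ x y : K, (x + y) ^ q = x ^ q + y ^ q) {R : Fin 3 → K}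
    (hRR : hermitianForm q R R ≠ 0) :
    Nat.card {P : ℙ K (Fin 3 → K) // hermitianForm q P.rep R = 0 ∧
      hermitianForm q P.rep P.rep = 0} = q + 1 := by
  let S (v : Fin 3 → K) : Prop := hermitianForm q v R = 0 ∧ hermitianForm q v v = 0
  have hS (t : K) (v : Fin 3 → K) (ht : t ≠ 0) : S (t • v) ↔ S v := by
    simp only [S, hermitianForm_smul_left, hermitianForm_smul_right, mul_eq_zero, ht,
      pow_ne_zero q ht, false_or]
  have hvectors := Nat.card_subtype_ne_zero_and_add_one (S := S) (by simp [S, hermitianForm])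
  rw [card_polar_hermitian_zeros hK hfrob hRR, Nat.add_right_cancel_iff] at hvectors
  have hcount := Projectivization.card_subtype_rep_mul_card_units_s4 S hS
  rw [hvectors, Nat.card_units, Nat.card_eq_fintype_card (α := K), hK] at hcount
  exact Nat.eq_of_mul_eq_mul_right
    (Nat.sub_pos_of_lt (Nat.one_lt_pow two_ne_zero (one_lt_of_card_eq_sq hK))) hcount

end PolarLine

theorem polar_line_of_point_off_hermitian_curve_is_chord_general
    (p n q : ℕ) (hp : p.Prime) (hq : q = p ^ n)
    (F : Type) [Field F] [Fintype F] (hF : Fintype.card F = q ^ 2)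
    (a b c : F)
    (habc : a ^ (q + 1) + b ^ (q + 1) + c ^ (q + 1) ≠ 0) :
    Nat.card {P : Projectivization F (Fin 3 → F) //
        a ^ q * P.rep 0 + b ^ q * P.rep 1 + c ^ q * P.rep 2 = 0 ∧
        P.rep 0 ^ (q + 1) + P.rep 1 ^ (q + 1) + P.rep 2 ^ (q + 1) = 0} = q + 1 := by
  have : Fact p.Prime := ⟨hp⟩
  have : CharP F p := charP_of_card_eq_prime_pow (hF.trans (by rw [hq, ← pow_mul]))
  have hfrob : ∀ x y : F, (x + y) ^ q = x ^ q + y ^ q := by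
    rw [hq]
    exact fun x y => add_pow_char_pow x y p n
  have hRR : hermitianForm q ![a, b, c] ![a, b, c] ≠ 0 := by
    simpa [hermitianForm, Fin.sum_univ_three, ← pow_succ'] using habc
  refine (Nat.card_congr (Equiv.subtypeEquivRight fun P => ?_)).trans
    (card_polar_hermitian_points hF hfrob hRR)
  simp [hermitianForm, Fin.sum_univ_three, ← pow_succ', mul_comm]

/-- Let `q = p ^ n` and `F` be a finite field with `q²` elements. If
`R = [a : b : c]` is a point of `PG(2, F)` not lying on the Hermitian curve
`x^(q+1) + y^(q+1) + t^(q+1) = 0`, then its polar line `a^q X + b^q Y + c^q T = 0` contains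
exactly `q + 1` points of the Hermitian curve, i.e. it is a chord of `H_q(F)`. -/
theorem polar_line_of_point_off_hermitian_curve_is_chord
    (p n q : ℕ) (hp : p.Prime) (hn : 1 ≤ n) (hq : q = p ^ n)
    (F : Type) [Field F] [Fintype F] (hF : Fintype.card F = q ^ 2)
    (a b c : F) (hv : ![a, b, c] ≠ 0)
    (habc : a ^ (q + 1) + b ^ (q + 1) + c ^ (q + 1) ≠ 0) :
    Nat.card {P : Projectivization F (Fin 3 → F) //
        a ^ q * P.rep 0 + b ^ q * P.rep 1 + c ^ q * P.rep 2 = 0 ∧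
        P.rep 0 ^ (q + 1) + P.rep 1 ^ (q + 1) + P.rep 2 ^ (q + 1) = 0} = q + 1 :=
  polar_line_of_point_off_hermitian_curve_is_chord_general p n q hp hq F hF a b c habc
end

section
/- Let p be a prime, n ≥ 1, q = p^n, and let F be a finite field with q² elements. The set S = { τ_{1,b,c} : b, c ∈ F, b^{q+1} = c^q + c } is a subgroup of GL(3,F) of cardinality q³. Moreover, every element of S fixes the vector line spanned by (1, 0, 0) and maps the set of vectors (x, y, t) ∈ F³ satisfying y^{q+1} = x^q t + x t^q bijectively onto itself. -/
/-- The matrix `τ_{1,b,c}` with rows `(1, b^q, c)`, `(0, 1, b)`, `(0, 0, 1)`. -/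
def tau {F : Type} [Field F] (q : ℕ) (b c : F) : Matrix (Fin 3) (Fin 3) F :=
  !![1, b ^ q, c; 0, 1, b; 0, 0, 1]

/-!
For `#F = q²` the map `σ x = x ^ q` is an involutive field automorphism, and
`τ(b, c) τ(b', c') = τ(b + b', c + σ b * b' + c')`, `τ(b, c)⁻¹ = τ(-b, b ^ (q + 1) - c)`.
These formulas preserve the condition `b ^ (q + 1) = σ c + c`, so the matrices form a group
in bijection with its solutions `(b, c)`. For each `b` the norm `b ^ (q + 1)` is `σ`-fixed,
and the trace `c ↦ σ c + c` maps onto the `σ`-fixed elements with a kernel of size `q`: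
kernel and image are root sets of `X ^ q ± X`, so each has at most `q` elements, while their
sizes multiply to `q²`. Hence there are `q² · q` solutions. The curve is preserved by
expanding with additivity of `σ`, and the inverse matrix preserves it too.
-/

open Matrix

/-- Abstracts the conjugation `x ↦ x ^ q` of `𝔽_{q²}` over `𝔽_q`. -/
structure IsInvolutiveFrobenius (R : Type*) [CommRing R] (q : ℕ) : Prop where
  add_pow : ∀ a b : R, (a + b) ^ q = a ^ q + b ^ q
  pow_pow : ∀ a : R, (a ^ q) ^ q = a

namespace IsInvolutiveFrobenius

variable {R : Type*} [CommRing R] {q : ℕ}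

def ringHom (h : IsInvolutiveFrobenius R q) : R →+* R :=
  RingHom.mk' (powMonoidHom q) h.add_pow

theorem ringHom_apply (h : IsInvolutiveFrobenius R q) (a : R) : h.ringHom a = a ^ q := rfl

theorem zero_pow (h : IsInvolutiveFrobenius R q) : (0 : R) ^ q = 0 := map_zero h.ringHom

theorem neg_pow (h : IsInvolutiveFrobenius R q) (a : R) : (-a) ^ q = -a ^ q :=
  map_neg h.ringHom a

theorem sub_pow (h : IsInvolutiveFrobenius R q) (a b : R) : (a - b) ^ q = a ^ q - b ^ q :=
  map_sub h.ringHom a b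

theorem pow_succ_pow (h : IsInvolutiveFrobenius R q) (a : R) :
    (a ^ (q + 1)) ^ q = a ^ (q + 1) := by
  rw [pow_succ, mul_pow, h.pow_pow, mul_comm]

end IsInvolutiveFrobenius

theorem FiniteField.isInvolutiveFrobenius_of_card_eq_sq {F : Type*} [Field F] [Fintype F]
    {q : ℕ} (hF : Fintype.card F = q ^ 2) : IsInvolutiveFrobenius F q where
  add_pow a b := by
    obtain ⟨p, _, m, hp, hcard⟩ := FiniteField.card' F
    have : Fact p.Prime := ⟨hp⟩
    obtain ⟨k, -, rfl⟩ := (Nat.dvd_prime_pow hp).1 (hcard ▸ hF ▸ dvd_pow_self q two_ne_zero)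
    exact add_pow_char_pow a b p k
  pow_pow a := by rw [← pow_mul, ← sq, ← hF, FiniteField.pow_card]

theorem FiniteField.one_lt_of_card_eq_sq {F : Type*} [Field F] [Fintype F] {q : ℕ}
    (hF : Fintype.card F = q ^ 2) : 1 < q := by
  have := Fintype.one_lt_card (α := F)
  by_contra! hq
  nlinarith

theorem Polynomial.ncard_setOf_pow_eq_mul_le {R : Type*} [CommRing R] [IsDomain R] {q : ℕ}
    (hq : 1 < q) (a : R) : {x : R | x ^ q = a * x}.ncard ≤ q := by
  set f : Polynomial R := X ^ q - C a * X
  have hdeg : f.natDegree = q := by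
    rw [natDegree_sub_eq_left_of_natDegree_lt] <;> rw [natDegree_X_pow]
    exact (natDegree_C_mul_le a X).trans_lt (natDegree_X (R := R) ▸ hq)
  have hf : f ≠ 0 := fun h0 => by rw [h0, natDegree_zero] at hdeg; omega
  calc {x : R | x ^ q = a * x}.ncard ≤ (f.rootSet R).ncard :=
        Set.ncard_le_ncard (fun x hx => (mem_rootSet.2 ⟨hf, by simp [f, hx.out]⟩))
          (f.rootSet_finite R)
    _ ≤ q := hdeg ▸ f.ncard_rootSet_le R

theorem AddMonoidHom.card_range_mul_card_ker {G H : Type*} [AddGroup G] [AddGroup H]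
    (f : G →+ H) : Nat.card f.range * Nat.card f.ker = Nat.card G := by
  rw [AddSubgroup.card_eq_card_quotient_mul_card_addSubgroup f.ker,
    Nat.card_congr (QuotientAddGroup.quotientKerEquivRange f).toEquiv]

theorem AddMonoidHom.card_setOf_eq_apply {A B C : Type*} [AddGroup A] [AddGroup B]
    (f : A →+ B) {g : C → B} (hg : ∀ c, g c ∈ f.range) :
    Nat.card {x : C × A | g x.1 = f x.2} = Nat.card C * Nat.card f.ker := by
  choose a ha using hg
  have fiber (c : C) : {x : A | g c = f x} ≃ f.ker :=
    (Equiv.setCongr (by ext x; simp [← ha c, eq_comm])).trans (f.fiberEquivKer (a c))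
  let e : {x : C × A | g x.1 = f x.2} ≃ C × f.ker :=
    (Equiv.subtypeProdEquivSigmaSubtype fun c x => g c = f x).trans
      ((Equiv.sigmaCongrRight fiber).trans (Equiv.sigmaEquivProd _ _))
  rw [Nat.card_congr e, Nat.card_prod]

namespace IsInvolutiveFrobenius

variable {F : Type} [Field F] {q : ℕ}

def traceHom (h : IsInvolutiveFrobenius F q) : F →+ F :=
  h.ringHom.toAddMonoidHom + AddMonoidHom.id F

theorem traceHom_apply (h : IsInvolutiveFrobenius F q) (c : F) : h.traceHom c = c ^ q + c := rfl

def fixedAddSubgroup (h : IsInvolutiveFrobenius F q) : AddSubgroup F :=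
  (h.ringHom.toAddMonoidHom - AddMonoidHom.id F).ker

theorem mem_fixedAddSubgroup (h : IsInvolutiveFrobenius F q) {x : F} :
    x ∈ h.fixedAddSubgroup ↔ x ^ q = x := by
  simp [fixedAddSubgroup, ringHom_apply, sub_eq_zero]

theorem range_traceHom_le (h : IsInvolutiveFrobenius F q) :
    h.traceHom.range ≤ h.fixedAddSubgroup := by
  rintro _ ⟨c, rfl⟩
  rw [mem_fixedAddSubgroup, traceHom_apply, h.add_pow, h.pow_pow, add_comm]

theorem card_ker_traceHom_le (h : IsInvolutiveFrobenius F q) (hq : 1 < q) :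
    Nat.card h.traceHom.ker ≤ q := by
  have hker : (h.traceHom.ker : Set F) = {x | x ^ q = -1 * x} := by
    ext x
    simp [traceHom_apply, add_eq_zero_iff_eq_neg]
  rw [← SetLike.coe_sort_coe, Nat.card_coe_set_eq, hker]
  exact Polynomial.ncard_setOf_pow_eq_mul_le hq (-1)

theorem card_fixedAddSubgroup_le (h : IsInvolutiveFrobenius F q) (hq : 1 < q) :
    Nat.card h.fixedAddSubgroup ≤ q := by
  have hfix : (h.fixedAddSubgroup : Set F) = {x | x ^ q = 1 * x} := by
    ext x
    simp [mem_fixedAddSubgroup]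
  rw [← SetLike.coe_sort_coe, Nat.card_coe_set_eq, hfix]
  exact Polynomial.ncard_setOf_pow_eq_mul_le hq 1

variable [Fintype F]

theorem card_ker_traceHom (h : IsInvolutiveFrobenius F q) (hF : Fintype.card F = q ^ 2) :
    Nat.card h.traceHom.ker = q := by
  have hq := FiniteField.one_lt_of_card_eq_sq hF
  have hrange := (AddSubgroup.card_le_of_le h.range_traceHom_le).trans
    (h.card_fixedAddSubgroup_le hq)
  have hprod := h.traceHom.card_range_mul_card_ker
  rw [Nat.card_eq_fintype_card (α := F), hF] at hprod
  nlinarith [h.card_ker_traceHom_le hq]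

theorem range_traceHom (h : IsInvolutiveFrobenius F q) (hF : Fintype.card F = q ^ 2) :
    h.traceHom.range = h.fixedAddSubgroup := by
  have hq := FiniteField.one_lt_of_card_eq_sq hF
  have hprod := h.traceHom.card_range_mul_card_ker
  rw [h.card_ker_traceHom hF, Nat.card_eq_fintype_card (α := F), hF, sq] at hprod
  exact AddSubgroup.eq_of_le_of_card_ge h.range_traceHom_le
    ((h.card_fixedAddSubgroup_le hq).trans (Nat.eq_of_mul_eq_mul_right (by omega) hprod).ge)

theorem pow_succ_mem_range_traceHom (h : IsInvolutiveFrobenius F q)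
    (hF : Fintype.card F = q ^ 2) (b : F) : b ^ (q + 1) ∈ h.traceHom.range := by
  rw [h.range_traceHom hF, mem_fixedAddSubgroup, h.pow_succ_pow]

end IsInvolutiveFrobenius

section Tau

variable {F : Type} [Field F] {q : ℕ}

theorem tau_inj {b c b' c' : F} : tau q b c = tau q b' c' ↔ b = b' ∧ c = c' := by
  refine ⟨fun e => ⟨congrFun (congrFun e 1) 2, congrFun (congrFun e 0) 2⟩, ?_⟩
  rintro ⟨rfl, rfl⟩
  rfl

theorem tau_mulVec (b c : F) (v : Fin 3 → F) :
    tau q b c *ᵥ v = ![v 0 + b ^ q * v 1 + c * v 2, v 1 + b * v 2, v 2] := by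
  ext i
  fin_cases i <;> simp [tau, mulVec, dotProduct, Fin.sum_univ_three]

theorem tau_mulVec_basis_zero (b c : F) : tau q b c *ᵥ ![1, 0, 0] = ![1, 0, 0] := by
  simp [tau_mulVec]

theorem tau_mul_tau (h : IsInvolutiveFrobenius F q) (b c b' c' : F) :
    tau q b c * tau q b' c' = tau q (b + b') (c + b ^ q * b' + c') := by
  ext i j
  fin_cases i <;> fin_cases j <;> simp [tau, mul_apply, Fin.sum_univ_three, h.add_pow] <;> ring

theorem tau_zero_zero (h : IsInvolutiveFrobenius F q) : tau q (0 : F) 0 = 1 := by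
  ext i j
  fin_cases i <;> fin_cases j <;> simp [tau, h.zero_pow, one_apply]

theorem tau_mul_tau_neg (h : IsInvolutiveFrobenius F q) (b c : F) :
    tau q b c * tau q (-b) (b ^ (q + 1) - c) = 1 := by
  rw [tau_mul_tau h, ← tau_zero_zero h]
  congr 1 <;> ring

theorem tau_neg_mul_tau (h : IsInvolutiveFrobenius F q) (b c : F) :
    tau q (-b) (b ^ (q + 1) - c) * tau q b c = 1 := by
  rw [tau_mul_tau h, ← tau_zero_zero h, h.neg_pow]
  congr 1 <;> ring

def tauUnit (h : IsInvolutiveFrobenius F q) (b c : F) : GL (Fin 3) F :=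
  ⟨tau q b c, tau q (-b) (b ^ (q + 1) - c), tau_mul_tau_neg h b c, tau_neg_mul_tau h b c⟩

variable (F q) in
/-- The affine points `(x, y) = (c, b)` of the norm-trace curve at `t = 1`. -/
def tauParams : Set (F × F) := {x | x.1 ^ (q + 1) = x.2 ^ q + x.2}

theorem zero_mem_tauParams (h : IsInvolutiveFrobenius F q) :
    ((0 : F), (0 : F)) ∈ tauParams F q := by
  simp [tauParams, h.zero_pow]

theorem add_mem_tauParams (h : IsInvolutiveFrobenius F q) {b c b' c' : F}
    (hbc : (b, c) ∈ tauParams F q) (hbc' : (b', c') ∈ tauParams F q) :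
    (b + b', c + b ^ q * b' + c') ∈ tauParams F q := by
  simp only [tauParams, Set.mem_ofPred_eq, pow_succ] at hbc hbc' ⊢
  rw [h.add_pow, h.add_pow, h.add_pow, mul_pow, h.pow_pow]
  linear_combination hbc + hbc'

theorem neg_mem_tauParams (h : IsInvolutiveFrobenius F q) {b c : F}
    (hbc : (b, c) ∈ tauParams F q) : (-b, b ^ (q + 1) - c) ∈ tauParams F q := by
  simp only [tauParams, Set.mem_ofPred_eq] at hbc ⊢
  rw [h.sub_pow, h.pow_succ_pow, pow_succ, h.neg_pow]
  linear_combination -hbc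

def tauSubgroup (h : IsInvolutiveFrobenius F q) : Subgroup (GL (Fin 3) F) where
  carrier := (fun x : F × F => tauUnit h x.1 x.2) '' tauParams F q
  mul_mem' := by
    rintro _ _ ⟨⟨b, c⟩, hbc, rfl⟩ ⟨⟨b', c'⟩, hbc', rfl⟩
    exact ⟨_, add_mem_tauParams h hbc hbc', Units.ext (tau_mul_tau h b c b' c').symm⟩
  one_mem' := ⟨_, zero_mem_tauParams h, Units.ext (tau_zero_zero h)⟩
  inv_mem' := by
    rintro _ ⟨⟨b, c⟩, hbc, rfl⟩
    exact ⟨_, neg_mem_tauParams h hbc, Units.ext rfl⟩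

theorem image_val_tauSubgroup (h : IsInvolutiveFrobenius F q) :
    Units.val '' (tauSubgroup h : Set (GL (Fin 3) F)) =
      {A | ∃ b c : F, b ^ (q + 1) = c ^ q + c ∧ A = tau q b c} := by
  ext A
  simp [tauSubgroup, tauUnit, tauParams, eq_comm]

theorem card_tauSubgroup (h : IsInvolutiveFrobenius F q) :
    Nat.card (tauSubgroup h) = Nat.card (tauParams F q) :=
  Nat.card_image_of_injective (fun _ _ e => Prod.ext_iff.2 (tau_inj.1 (congrArg Units.val e))) _

theorem card_tauParams [Fintype F] (h : IsInvolutiveFrobenius F q)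
    (hF : Fintype.card F = q ^ 2) :
    Nat.card (tauParams F q) = q ^ 3 := by
  rw [show tauParams F q = {x | x.1 ^ (q + 1) = h.traceHom x.2} from rfl,
    h.traceHom.card_setOf_eq_apply (h.pow_succ_mem_range_traceHom hF), h.card_ker_traceHom hF,
    Nat.card_eq_fintype_card, hF]
  ring

variable (F q) in
def normTraceCone : Set (Fin 3 → F) := {v | v 1 ^ (q + 1) = v 0 ^ q * v 2 + v 0 * v 2 ^ q}

theorem mapsTo_tau_normTraceCone (h : IsInvolutiveFrobenius F q) {b c : F}
    (hbc : (b, c) ∈ tauParams F q) :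
    Set.MapsTo (tau q b c).mulVec (normTraceCone F q) (normTraceCone F q) := by
  intro v hv
  simp only [normTraceCone, tauParams, Set.mem_ofPred_eq, tau_mulVec, pow_succ] at hv hbc ⊢
  simp only [cons_val_zero, cons_val_one, cons_val_two, head_cons, tail_cons, h.add_pow, mul_pow,
    h.pow_pow]
  linear_combination hv + (v 2 ^ q * v 2) * hbc

theorem bijOn_tau_normTraceCone (h : IsInvolutiveFrobenius F q) {b c : F}
    (hbc : (b, c) ∈ tauParams F q) :
    Set.BijOn (tau q b c).mulVec (normTraceCone F q) (normTraceCone F q) := by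
  refine Set.InvOn.bijOn ⟨fun v _ => ?_, fun v _ => ?_⟩ (mapsTo_tau_normTraceCone h hbc)
    (mapsTo_tau_normTraceCone h (neg_mem_tauParams h hbc))
  · rw [mulVec_mulVec, tau_neg_mul_tau h, one_mulVec]
  · rw [mulVec_mulVec, tau_mul_tau_neg h, one_mulVec]

end Tau

theorem tau_subgroup_order_q_cubed_fixes_line_and_preserves_curve_general
    (q : ℕ)
    (F : Type) [Field F] [Fintype F] (hF : Fintype.card F = q ^ 2) :
    (∃ H : Subgroup (GL (Fin 3) F),
      Units.val '' (H : Set (GL (Fin 3) F)) =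
        {A : Matrix (Fin 3) (Fin 3) F | ∃ b c : F, b ^ (q + 1) = c ^ q + c ∧ A = tau q b c} ∧
      Nat.card H = q ^ 3) ∧
    ∀ A ∈ {A : Matrix (Fin 3) (Fin 3) F | ∃ b c : F, b ^ (q + 1) = c ^ q + c ∧ A = tau q b c},
      (∀ v ∈ Submodule.span F {![(1 : F), 0, 0]},
        A.mulVec v ∈ Submodule.span F {![(1 : F), 0, 0]}) ∧
      Set.BijOn A.mulVec
        {v : Fin 3 → F | v 1 ^ (q + 1) = v 0 ^ q * v 2 + v 0 * v 2 ^ q}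
        {v : Fin 3 → F | v 1 ^ (q + 1) = v 0 ^ q * v 2 + v 0 * v 2 ^ q} := by
  have h := FiniteField.isInvolutiveFrobenius_of_card_eq_sq hF
  refine ⟨⟨tauSubgroup h, image_val_tauSubgroup h, ?_⟩, ?_⟩
  · rw [card_tauSubgroup, card_tauParams h hF]
  rintro _ ⟨b, c, hbc, rfl⟩
  refine ⟨fun v hv => ?_, bijOn_tau_normTraceCone h hbc⟩
  obtain ⟨a, rfl⟩ := Submodule.mem_span_singleton.1 hv
  rwa [mulVec_smul, tau_mulVec_basis_zero]

/-- Let `q = p ^ n` and `F` be a finite field with `q²` elements. The set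
`S = { τ_{1,b,c} : b, c ∈ F, b^(q+1) = c^q + c }` is a subgroup of `GL(3, F)` of cardinality
`q³`; every element of `S` fixes the vector line spanned by `(1, 0, 0)` and maps the set of
vectors satisfying the norm-trace equation `y^(q+1) = x^q t + x t^q` bijectively onto itself. -/
theorem tau_subgroup_order_q_cubed_fixes_line_and_preserves_curve
    (p n q : ℕ) (hp : p.Prime) (hn : 1 ≤ n) (hq : q = p ^ n)
    (F : Type) [Field F] [Fintype F] (hF : Fintype.card F = q ^ 2) :
    (∃ H : Subgroup (GL (Fin 3) F),
      Units.val '' (H : Set (GL (Fin 3) F)) =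
        {A : Matrix (Fin 3) (Fin 3) F | ∃ b c : F, b ^ (q + 1) = c ^ q + c ∧ A = tau q b c} ∧
      Nat.card H = q ^ 3) ∧
    ∀ A ∈ {A : Matrix (Fin 3) (Fin 3) F | ∃ b c : F, b ^ (q + 1) = c ^ q + c ∧ A = tau q b c},
      (∀ v ∈ Submodule.span F {![(1 : F), 0, 0]},
        A.mulVec v ∈ Submodule.span F {![(1 : F), 0, 0]}) ∧
      Set.BijOn A.mulVec
        {v : Fin 3 → F | v 1 ^ (q + 1) = v 0 ^ q * v 2 + v 0 * v 2 ^ q}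
        {v : Fin 3 → F | v 1 ^ (q + 1) = v 0 ^ q * v 2 + v 0 * v 2 ^ q} :=
  tau_subgroup_order_q_cubed_fixes_line_and_preserves_curve_general q F hF
end

section
/- Let q = 2^n with n ≥ 1, and let F be a finite field with q² elements. In the group S = { τ_{1,b,c} : b, c ∈ F, b^{q+1} = c^q + c } of order q³, an element τ_{1,b,c} has order 2 if and only if b = 0 and c ≠ 0, and every element with b ≠ 0 has order 4. In particular S has exponent 4 and contains exactly q − 1 involutions. -/
/-!
In characteristic `2` one has `τ_{1,b,c}² = τ_{1,0,b^(q+1)}`, so `τ² = 1` exactly when `b = 0`,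
and `τ⁴ = 1` always. The involutions of `S` are thus the `τ_{1,0,c}` with `c^q = c ≠ 0`, i.e.
with `c` a `(q - 1)`-th root of unity; since `Fˣ` is cyclic of order `q² - 1`, a multiple of
`q - 1`, there are exactly `q - 1` of them.
-/

open Polynomial Finset

section Tau

variable {F : Type} [Field F] {q : ℕ}

theorem tau_injective (q : ℕ) (b : F) : Function.Injective (tau q b) := fun c c' h => by
  simpa [tau] using congrFun (congrFun h 0) 2

theorem tau_eq_one_iff (hq : q ≠ 0) {b c : F} : tau q b c = 1 ↔ b = 0 ∧ c = 0 := by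
  simp [tau, Matrix.one_fin_three, hq, and_comm]

variable [CharP F 2]

theorem tau_sq (hq : q ≠ 0) (b c : F) : tau q b c ^ 2 = tau q 0 (b ^ (q + 1)) := by
  rw [sq, tau, tau, Matrix.mul_fin_three]
  congr 1
  simp [hq, pow_succ, add_right_comm c, CharTwo.add_self_eq_zero]

theorem tau_sq_eq_one_iff (hq : q ≠ 0) {b c : F} : tau q b c ^ 2 = 1 ↔ b = 0 := by
  simp [tau_sq hq, tau_eq_one_iff hq]

theorem tau_pow_four (hq : q ≠ 0) (b c : F) : tau q b c ^ 4 = 1 := by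
  rw [show 4 = 2 * 2 from rfl, pow_mul, tau_sq hq, tau_sq_eq_one_iff hq]

theorem orderOf_tau_eq_two_iff (hq : q ≠ 0) {b c : F} :
    orderOf (tau q b c) = 2 ↔ b = 0 ∧ c ≠ 0 := by
  simp only [orderOf_eq_prime_iff, tau_sq_eq_one_iff hq, ne_eq, tau_eq_one_iff hq]
  tauto

theorem orderOf_tau_of_ne_zero (hq : q ≠ 0) {b : F} (hb : b ≠ 0) (c : F) :
    orderOf (tau q b c) = 4 :=
  orderOf_eq_prime_pow (p := 2) (n := 1) (by rwa [pow_one, tau_sq_eq_one_iff hq])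
    (tau_pow_four hq b c)

end Tau

theorem FiniteField.exists_isPrimitiveRoot_of_dvd_card_sub_one {F : Type*} [Field F] [Fintype F]
    {d : ℕ} (hd : d ∣ Fintype.card F - 1) : ∃ ζ : F, IsPrimitiveRoot ζ d := by
  obtain ⟨g, hg⟩ := IsCyclic.exists_ofOrder_eq_natCard (α := Fˣ)
  obtain ⟨k, hk⟩ := hd
  refine ⟨(g ^ k : Fˣ),
    IsPrimitiveRoot.coe_units_iff.mpr <| (IsPrimitiveRoot.orderOf g).pow ?_ ?_⟩
  · rw [hg]; exact Nat.card_pos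
  · rw [hg, Nat.card_units, Nat.card_eq_fintype_card, hk, mul_comm]

theorem FiniteField.card_nthRootsFinset_one_of_dvd_card_sub_one {F : Type*} [Field F] [Fintype F]
    {d : ℕ} (hd : d ∣ Fintype.card F - 1) : #(nthRootsFinset d (1 : F)) = d :=
  (exists_isPrimitiveRoot_of_dvd_card_sub_one hd).choose_spec.card_nthRootsFinset

section Involutions

variable {F : Type} [Field F] [CharP F 2] {q : ℕ}

theorem add_pow_self_eq_zero_and_ne_zero_iff (hq : 1 < q) {c : F} :
    c ^ q + c = 0 ∧ c ≠ 0 ↔ c ^ (q - 1) = 1 := by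
  have hpow : c ^ q = c ^ (q - 1) * c := by rw [← pow_succ, Nat.sub_add_cancel hq.le]
  rw [CharTwo.add_eq_zero, hpow]
  constructor
  · rintro ⟨h, hc⟩
    exact (mul_eq_right₀ hc).mp h
  · intro h
    have hc : c ≠ 0 := by
      rintro rfl
      simp [zero_pow (Nat.sub_ne_zero_of_lt hq)] at h
    exact ⟨by rw [h, one_mul], hc⟩

theorem setOf_tau_orderOf_eq_two (hq : 1 < q) :
    {A | (∃ b c : F, b ^ (q + 1) = c ^ q + c ∧ A = tau q b c) ∧ orderOf A = 2} =
      tau q 0 '' ↑(nthRootsFinset (q - 1) (1 : F)) := by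
  have hq0 : q ≠ 0 := by omega
  ext A
  simp only [Set.mem_ofPred_eq, Set.mem_image, Finset.mem_coe,
    mem_nthRootsFinset (by omega : 0 < q - 1), ← add_pow_self_eq_zero_and_ne_zero_iff hq]
  constructor
  · rintro ⟨⟨b, c, hbc, rfl⟩, hA⟩
    obtain ⟨rfl, hc⟩ := (orderOf_tau_eq_two_iff hq0).mp hA
    exact ⟨c, ⟨by rw [← hbc, zero_pow (by omega)], hc⟩, rfl⟩
  · rintro ⟨c, ⟨hc, hc0⟩, rfl⟩
    exact ⟨⟨0, c, by rw [hc, zero_pow (by omega)], rfl⟩,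
      (orderOf_tau_eq_two_iff hq0).mpr ⟨rfl, hc0⟩⟩

end Involutions

theorem tau_orders_char_two_general
    (n q : ℕ) (hq : q = 2 ^ n)
    (F : Type) [Field F] [Fintype F] (hF : Fintype.card F = q ^ 2) :
    (∀ b c : F, b ^ (q + 1) = c ^ q + c →
      ((orderOf (tau q b c) = 2 ↔ (b = 0 ∧ c ≠ 0)) ∧
        (b ≠ 0 → orderOf (tau q b c) = 4) ∧
        (tau q b c) ^ 4 = 1)) ∧
    Nat.card {A : Matrix (Fin 3) (Fin 3) F //
        (∃ b c : F, b ^ (q + 1) = c ^ q + c ∧ A = tau q b c) ∧ orderOf A = 2} = q - 1 := by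
  have : CharP F 2 := charP_of_card_eq_prime_pow (f := n * 2) (by rw [hF, hq, pow_mul])
  have hq1 : 1 < q := (Nat.one_lt_pow_iff two_ne_zero).mp (hF ▸ Fintype.one_lt_card)
  have hq0 : q ≠ 0 := by omega
  refine ⟨fun b c _ => ⟨orderOf_tau_eq_two_iff hq0, fun hb => orderOf_tau_of_ne_zero hq0 hb c,
    tau_pow_four hq0 b c⟩, ?_⟩
  have hdvd : q - 1 ∣ Fintype.card F - 1 := by simpa [hF] using Nat.sub_dvd_pow_sub_pow q 1 2
  rw [← FiniteField.card_nthRootsFinset_one_of_dvd_card_sub_one hdvd, ← Set.ncard_coe_finset,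
    ← Set.ncard_image_of_injective _ (tau_injective q 0), ← setOf_tau_orderOf_eq_two hq1]
  exact Nat.card_coe_set_eq _

/-- Let `q = 2 ^ n`, `n ≥ 1`, and `F` be a finite field with `q²` elements.
In the group `S = { τ_{1,b,c} : b, c ∈ F, b^(q+1) = c^q + c }` of order `q³`, an element
`τ_{1,b,c}` has order `2` iff `b = 0` and `c ≠ 0`, every element with `b ≠ 0` has order `4`;
in particular `S` has exponent `4` (every element satisfies `τ⁴ = 1`) and contains exactly
`q - 1` involutions. -/
theorem tau_orders_char_two
    (n q : ℕ) (hn : 1 ≤ n) (hq : q = 2 ^ n)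
    (F : Type) [Field F] [Fintype F] (hF : Fintype.card F = q ^ 2) :
    (∀ b c : F, b ^ (q + 1) = c ^ q + c →
      ((orderOf (tau q b c) = 2 ↔ (b = 0 ∧ c ≠ 0)) ∧
        (b ≠ 0 → orderOf (tau q b c) = 4) ∧
        (tau q b c) ^ 4 = 1)) ∧
    Nat.card {A : Matrix (Fin 3) (Fin 3) F //
        (∃ b c : F, b ^ (q + 1) = c ^ q + c ∧ A = tau q b c) ∧ orderOf A = 2} = q - 1 :=
  tau_orders_char_two_general n q hq F hF
end

section
/- Let p be a prime, n ≥ 1, q = p^n, and let F be a finite field with q² elements. Let P₁ ≠ P₂ and Q₁ ≠ Q₂ be points of PG(2,F) whose homogeneous coordinates satisfy x^{q+1} + y^{q+1} + t^{q+1} = 0. Then there exists a matrix A ∈ GL(3,F) that maps the set of nonzero solutions of x^{q+1} + y^{q+1} + t^{q+1} = 0 in F³ onto itself and whose induced projective map sends P₁ to Q₁ and P₂ to Q₂. In other words, the group of projectivities preserving H_q(F) acts 2-transitively on H_q(F). -/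
/-!
The Frobenius `x ↦ x ^ q` is an involution of `F`, and the affine cone over `H_q(F)` is the set
of isotropic vectors of the Hermitian form `h(v, w) = Σ vᵢ^q wᵢ`. Two independent isotropic
vectors `v`, `w` have `h(v, w) ≠ 0`: otherwise the plane they span would lie in its own
orthogonal, which is the line spanned by `v^q ⨯ w^q`. Hence, after rescaling `w`, the pair extends
by a multiple of `v^q ⨯ w^q` to a basis with Gram matrix `[[0,1,0],[1,0,0],[0,0,1]]`; the third
vector can be normalised because the norm `l ↦ l^(q+1)` maps `F` onto the fixed field of the
Frobenius (`Fˣ` is cyclic). The matrix carrying such a basis for `(P₁, P₂)` to one for `(Q₁, Q₂)`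
is unitary, so it permutes the isotropic vectors.
-/

theorem IsCyclic.exists_pow_eq_of_pow_eq_one {G : Type*} [Group G] [IsCyclic G] [Finite G]
    {a b : ℕ} (hG : Nat.card G = a * b) {y : G} (hy : y ^ b = 1) : ∃ x : G, x ^ a = y := by
  obtain ⟨g, hg⟩ := IsCyclic.exists_generator (α := G)
  obtain ⟨k, rfl⟩ := Subgroup.mem_zpowers_iff.1 (hg y)
  have hb : (b : ℤ) ≠ 0 := by
    have := Nat.card_pos (α := G)
    rw [hG] at this
    exact_mod_cast (Nat.pos_of_mul_pos_left this).ne'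
  have hdvd : (a : ℤ) * b ∣ k * b := by
    rw [← Nat.cast_mul, ← hG, ← orderOf_eq_card_of_forall_mem_zpowers hg,
      orderOf_dvd_iff_zpow_eq_one, zpow_mul, zpow_natCast, hy]
  obtain ⟨j, rfl⟩ := (mul_dvd_mul_iff_right hb).1 hdvd
  exact ⟨g ^ j, by rw [← zpow_natCast, ← zpow_mul, mul_comm]⟩

theorem FiniteField.exists_pow_succ_eq_of_pow_eq_self {F : Type*} [Field F] [Fintype F] {q : ℕ}
    (hF : Fintype.card F = q ^ 2) {d : F} (hd : d ≠ 0) (hdq : d ^ q = d) :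
    ∃ l : F, l ^ (q + 1) = d := by
  have hq : q ≠ 0 := by
    rintro rfl
    exact Fintype.card_ne_zero (hF.trans (by simp))
  have hcard : Nat.card Fˣ = (q + 1) * (q - 1) := by
    rw [Nat.card_units, Nat.card_eq_fintype_card, hF, ← Nat.sq_sub_sq, one_pow]
  have hunit : Units.mk0 d hd ^ (q - 1) = 1 := by
    ext
    refine mul_right_cancel₀ hd ?_
    rw [Units.val_pow_eq_pow_val, Units.val_mk0, ← pow_succ, Nat.sub_add_cancel (by omega), hdq,
      Units.val_one, one_mul]
  obtain ⟨l, hl⟩ := IsCyclic.exists_pow_eq_of_pow_eq_one hcard hunit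
  exact ⟨l, by rw [← Units.val_pow_eq_pow_val, hl, Units.val_mk0]⟩

theorem FiniteField.pow_pow_eq_self_of_card_eq_sq {F : Type*} [Field F] [Fintype F] {q : ℕ}
    (hF : Fintype.card F = q ^ 2) (x : F) : (x ^ q) ^ q = x := by
  rw [← pow_mul, ← sq, ← hF, FiniteField.pow_card]

-- For `F` with `q²` elements this is the Frobenius involution; as a `StarRing` it turns
-- `star v ⬝ᵥ w` into the Hermitian form of the curve and brings in `Matrix.unitaryGroup`.
abbrev powStarRing {R : Type*} [CommRing R] (q : ℕ)
    (hadd : ∀ x y : R, (x + y) ^ q = x ^ q + y ^ q) (hinv : ∀ x : R, (x ^ q) ^ q = x) :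
    StarRing R where
  star x := x ^ q
  star_involutive := hinv
  star_mul x y := by rw [mul_pow, mul_comm]
  star_add := hadd

open Matrix

theorem transpose_of_conjTranspose_mul_self {n m R : Type*} [Fintype m] [NonUnitalSemiring R]
    [StarRing R] (e : n → m → R) :
    (of e)ᵀᴴ * (of e)ᵀ = of fun i j => star (e i) ⬝ᵥ e j := by
  ext i j
  simp [mul_apply, dotProduct]

theorem exists_smul_cross_eq_of_dotProduct_eq_zero {F : Type*} [Field F] {a b u : Fin 3 → F}
    (hab : a ⨯₃ b ≠ 0) (ha : a ⬝ᵥ u = 0) (hb : b ⬝ᵥ u = 0) : ∃ c : F, c • a ⨯₃ b = u := by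
  have hcross : a ⨯₃ b ⨯₃ u = 0 := by simp [cross_cross_eq_smul_sub_smul, ha, hb]
  have hdep : ¬LinearIndependent F ![a ⨯₃ b, u] :=
    crossProduct_ne_zero_iff_linearIndependent.not_right.1 hcross
  simpa [LinearIndependent.pair_iff' hab] using hdep

section Hermitian

variable {F : Type*} [Field F] [StarRing F]

theorem star_cross (v w : Fin 3 → F) : star (v ⨯₃ w) = star v ⨯₃ star w := by
  ext i
  fin_cases i <;> simp [cross_apply, mul_comm]

theorem star_dotProduct_ne_zero_of_isotropic {v w : Fin 3 → F} (hv : star v ⬝ᵥ v = 0)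
    (hw : star w ⬝ᵥ w = 0) (hvw : LinearIndependent F ![v, w]) : star v ⬝ᵥ w ≠ 0 := by
  intro h
  have hwv : star w ⬝ᵥ v = 0 := by rw [star_dotProduct, h, star_zero]
  have hcross := crossProduct_ne_zero_iff_linearIndependent.2 hvw
  have hx : star v ⨯₃ star w ≠ 0 := by rwa [← star_cross, star_ne_zero]
  obtain ⟨c, hc⟩ := exists_smul_cross_eq_of_dotProduct_eq_zero hx hv hwv
  obtain ⟨c', hc'⟩ := exists_smul_cross_eq_of_dotProduct_eq_zero hx h hw
  apply hcross
  calc v ⨯₃ w = (c • star v ⨯₃ star w) ⨯₃ (c' • star v ⨯₃ star w) := by rw [hc, hc']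
    _ = 0 := by simp [cross_self]

theorem exists_hyperbolic_frame (hnorm : ∀ d : F, d ≠ 0 → star d = d → ∃ l : F, star l * l = d)
    {v w : Fin 3 → F} (hv : star v ⬝ᵥ v = 0) (hw : star w ⬝ᵥ w = 0)
    (hvw : LinearIndependent F ![v, w]) :
    ∃ C : Matrix (Fin 3) (Fin 3) F, Cᴴ * C = !![0, 1, 0; 1, 0, 0; 0, 0, 1] ∧
      C *ᵥ Pi.single 0 1 = v ∧ ∃ c : F, c ≠ 0 ∧ C *ᵥ Pi.single 1 1 = c • w := by
  set s := star v ⬝ᵥ w with hs_def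
  have hs : s ≠ 0 := star_dotProduct_ne_zero_of_isotropic hv hw hvw
  have hwv : star w ⬝ᵥ v = star s := by rw [star_dotProduct]
  set x := star v ⨯₃ star w
  have hxv : star x ⬝ᵥ v = 0 := by
    rw [star_cross, star_star, star_star, dotProduct_comm, dot_self_cross]
  have hxw : star x ⬝ᵥ w = 0 := by
    rw [star_cross, star_star, star_star, dotProduct_comm, dot_cross_self]
  have hvx : star v ⬝ᵥ x = 0 := dot_self_cross _ _
  have hwx : star w ⬝ᵥ x = 0 := dot_cross_self _ _
  have hxx : star x ⬝ᵥ x = -(star s * s) := by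
    rw [star_cross, star_star, star_star, cross_dot_cross, dotProduct_comm v (star v), hv,
      dotProduct_comm v (star w), hwv, dotProduct_comm w (star v)]
    ring
  have hxx0 : star x ⬝ᵥ x ≠ 0 := by
    rw [hxx]; exact neg_ne_zero.2 (mul_ne_zero (star_ne_zero.2 hs) hs)
  obtain ⟨l, hl⟩ := hnorm (star x ⬝ᵥ x)⁻¹ (inv_ne_zero hxx0)
    (by rw [star_inv₀, ← star_dotProduct])
  rw [mul_comm] at hl
  refine ⟨(of ![v, s⁻¹ • w, l • x])ᵀ, ?_, by simp, s⁻¹, inv_ne_zero hs, by simp⟩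
  rw [transpose_of_conjTranspose_mul_self]
  ext i j
  fin_cases i <;> fin_cases j <;>
    simp [star_smul, hv, hw, hxv, hxw, hvx, hwx, hwv, ← hs_def, hs, ← mul_assoc, hl, hxx0]

end Hermitian

section Unitary

variable {n R : Type*} [Fintype n] [DecidableEq n] [CommRing R] [StarRing R]

theorem mul_nonsing_inv_mem_unitaryGroup {C C' : Matrix n n R} (hC : IsUnit C.det)
    (h : C'ᴴ * C' = Cᴴ * C) : C' * C⁻¹ ∈ unitaryGroup n R := by
  rw [mem_unitaryGroup_iff', star_eq_conjTranspose, conjTranspose_mul, Matrix.mul_assoc,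
    ← Matrix.mul_assoc C'ᴴ, h, Matrix.mul_assoc, ← Matrix.mul_assoc, ← conjTranspose_mul,
    mul_nonsing_inv _ hC, conjTranspose_one, Matrix.one_mul]

theorem star_mulVec_dotProduct_mulVec {A : Matrix n n R} (hA : A ∈ unitaryGroup n R)
    (v w : n → R) : star (A *ᵥ v) ⬝ᵥ (A *ᵥ w) = star v ⬝ᵥ w := by
  rw [star_mulVec, ← dotProduct_mulVec, mulVec_mulVec, ← star_eq_conjTranspose,
    (mem_unitaryGroup_iff'.1 hA), one_mulVec]

theorem bijOn_mulVec_isotropic {A : Matrix n n R} (hA : A ∈ unitaryGroup n R) :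
    Set.BijOn A.mulVec {v | v ≠ 0 ∧ star v ⬝ᵥ v = 0} {v | v ≠ 0 ∧ star v ⬝ᵥ v = 0} := by
  have hmaps : ∀ {B : Matrix n n R}, B ∈ unitaryGroup n R →
      Set.MapsTo B.mulVec {v | v ≠ 0 ∧ star v ⬝ᵥ v = 0} {v | v ≠ 0 ∧ star v ⬝ᵥ v = 0} := by
    rintro B hB v ⟨hv0, hv⟩
    refine ⟨fun h => hv0 ?_, by rwa [star_mulVec_dotProduct_mulVec hB]⟩
    rw [← one_mulVec v, ← mem_unitaryGroup_iff'.1 hB, ← mulVec_mulVec, h, mulVec_zero]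
  refine Set.InvOn.bijOn (f' := (star A).mulVec) ⟨fun v _ => ?_, fun v _ => ?_⟩ (hmaps hA)
    (hmaps (Unitary.star_mem hA))
  · simp [mulVec_mulVec, mem_unitaryGroup_iff'.1 hA]
  · simp [mulVec_mulVec, mem_unitaryGroup_iff.1 hA]

end Unitary

theorem Projectivization.linearIndependent_rep_pair {K V : Type*} [DivisionRing K]
    [AddCommGroup V] [Module K V] {u v : Projectivization K V} (h : u ≠ v) :
    LinearIndependent K ![u.rep, v.rep] := by
  rw [← independent_mk_iff_LinearIndependent u.rep_nonzero v.rep_nonzero]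
  simpa using h

theorem hermitian_curve_two_transitive_general
    (p n q : ℕ) (hp : p.Prime) (hq : q = p ^ n)
    (F : Type) [Field F] [Fintype F] (hF : Fintype.card F = q ^ 2)
    (P₁ P₂ Q₁ Q₂ : Projectivization F (Fin 3 → F)) (hP : P₁ ≠ P₂) (hQ : Q₁ ≠ Q₂)
    (honc : ∀ P ∈ ({P₁, P₂, Q₁, Q₂} : Set (Projectivization F (Fin 3 → F))),
      P.rep 0 ^ (q + 1) + P.rep 1 ^ (q + 1) + P.rep 2 ^ (q + 1) = 0) :
    ∃ A : Matrix (Fin 3) (Fin 3) F, IsUnit A ∧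
      Set.BijOn A.mulVec
        {v : Fin 3 → F | v ≠ 0 ∧ v 0 ^ (q + 1) + v 1 ^ (q + 1) + v 2 ^ (q + 1) = 0}
        {v : Fin 3 → F | v ≠ 0 ∧ v 0 ^ (q + 1) + v 1 ^ (q + 1) + v 2 ^ (q + 1) = 0} ∧
      (∃ l : F, l ≠ 0 ∧ A.mulVec P₁.rep = l • Q₁.rep) ∧
      (∃ l : F, l ≠ 0 ∧ A.mulVec P₂.rep = l • Q₂.rep) := by
  have : Fact p.Prime := ⟨hp⟩
  have : CharP F p := charP_of_card_eq_prime_pow (hF.trans (by rw [hq, ← pow_mul]))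
  let : StarRing F := powStarRing q (fun x y => by rw [hq]; exact add_pow_char_pow ..)
    (FiniteField.pow_pow_eq_self_of_card_eq_sq hF)
  have hnorm (d : F) (hd : d ≠ 0) (hdq : star d = d) : ∃ l : F, star l * l = d :=
    (FiniteField.exists_pow_succ_eq_of_pow_eq_self hF hd hdq).imp fun l hl => by
      rw [← hl, pow_succ]; rfl
  have hcurve (v : Fin 3 → F) : v 0 ^ (q + 1) + v 1 ^ (q + 1) + v 2 ^ (q + 1) = star v ⬝ᵥ v := by
    simp only [dotProduct, Fin.sum_univ_three, pow_succ]
    rfl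
  simp only [hcurve] at honc ⊢
  obtain ⟨C, hC, hC₁, c, hc, hC₂⟩ := exists_hyperbolic_frame hnorm (honc P₁ (by simp))
    (honc P₂ (by simp)) (Projectivization.linearIndependent_rep_pair hP)
  obtain ⟨C', hC', hC'₁, c', hc', hC'₂⟩ := exists_hyperbolic_frame hnorm (honc Q₁ (by simp))
    (honc Q₂ (by simp)) (Projectivization.linearIndependent_rep_pair hQ)
  have hCdet : IsUnit C.det :=
    isUnit_of_mul_isUnit_right (by rw [← det_mul, hC]; simp [det_fin_three])
  have hA := mul_nonsing_inv_mem_unitaryGroup hCdet (hC'.trans hC.symm)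
  refine ⟨C' * C⁻¹, Unitary.isUnit_coe (U := ⟨_, hA⟩), bijOn_mulVec_isotropic hA,
    ⟨1, one_ne_zero, ?_⟩, ⟨c⁻¹ * c', mul_ne_zero (inv_ne_zero hc) hc', ?_⟩⟩
  · rw [← hC₁, mulVec_mulVec, nonsing_inv_mul_cancel_right _ _ hCdet, hC'₁, one_smul]
  · rw [← inv_smul_smul₀ hc P₂.rep, ← hC₂, mulVec_smul, mulVec_mulVec,
      nonsing_inv_mul_cancel_right _ _ hCdet, hC'₂, smul_smul]

/-- Let `q = p ^ n` and `F` be a finite field with `q²` elements. The group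
of projectivities preserving the Hermitian curve `H_q(F) : x^(q+1) + y^(q+1) + t^(q+1) = 0`
acts 2-transitively on `H_q(F)`: given points `P₁ ≠ P₂` and `Q₁ ≠ Q₂` of `PG(2, F)` lying on
the curve, some invertible matrix `A` maps the set of nonzero solutions of the equation onto
itself and its induced projectivity sends `P₁` to `Q₁` and `P₂` to `Q₂`. -/
theorem hermitian_curve_two_transitive
    (p n q : ℕ) (hp : p.Prime) (hn : 1 ≤ n) (hq : q = p ^ n)
    (F : Type) [Field F] [Fintype F] (hF : Fintype.card F = q ^ 2)
    (P₁ P₂ Q₁ Q₂ : Projectivization F (Fin 3 → F)) (hP : P₁ ≠ P₂) (hQ : Q₁ ≠ Q₂)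
    (honc : ∀ P ∈ ({P₁, P₂, Q₁, Q₂} : Set (Projectivization F (Fin 3 → F))),
      P.rep 0 ^ (q + 1) + P.rep 1 ^ (q + 1) + P.rep 2 ^ (q + 1) = 0) :
    ∃ A : Matrix (Fin 3) (Fin 3) F, IsUnit A ∧
      Set.BijOn A.mulVec
        {v : Fin 3 → F | v ≠ 0 ∧ v 0 ^ (q + 1) + v 1 ^ (q + 1) + v 2 ^ (q + 1) = 0}
        {v : Fin 3 → F | v ≠ 0 ∧ v 0 ^ (q + 1) + v 1 ^ (q + 1) + v 2 ^ (q + 1) = 0} ∧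
      (∃ l : F, l ≠ 0 ∧ A.mulVec P₁.rep = l • Q₁.rep) ∧
      (∃ l : F, l ≠ 0 ∧ A.mulVec P₂.rep = l • Q₂.rep) :=
  hermitian_curve_two_transitive_general p n q hp hq F hF P₁ P₂ Q₁ Q₂ hP hQ honc
end
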